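/- arXiv:1104.3316 — 6 statements merged into one kernel-verified Lean document; each statement's English description precedes it below -/
import Mathlib

section
/- There is a bijection between RNA secondary structures of length n (noncrossing partial matchings on [n] with no arc (i,i+1)) and 1-tableaux of length n, i.e., sequences of shapes (λ_0,...,λ_n) with one row each, λ_0 = λ_n = ∅, consecutive shapes differing by adding a square, removing a square, or nothing, and containing no consecutive (add, remove) pair. -/
open Finset Filter Topology Asymptotics

/-- An RNA secondary structure of length `n`: a set of arcs `(i,j)`, `1 ≤ i < j ≤ n`,
which form a partial matching (no shared endpoints), are noncrossing, and contain
no 1-arc `(i,i+1)`. -/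
def IsSecStr (n : ℕ) (A : Finset (ℕ × ℕ)) : Prop :=
  (∀ p ∈ A, 1 ≤ p.1 ∧ p.1 < p.2 ∧ p.2 ≤ n ∧ p.2 ≠ p.1 + 1) ∧
  (∀ p ∈ A, ∀ q ∈ A, p ≠ q →
    p.1 ≠ q.1 ∧ p.1 ≠ q.2 ∧ p.2 ≠ q.1 ∧ p.2 ≠ q.2) ∧
  (∀ p ∈ A, ∀ q ∈ A, ¬ (p.1 < q.1 ∧ q.1 < p.2 ∧ p.2 < q.2))

/-- `s(n)`: the number of RNA secondary structures of length `n`. -/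
noncomputable def secCount (n : ℕ) : ℕ :=
  Nat.card {A : Finset (ℕ × ℕ) // IsSecStr n A}

/-- The diagram graph of a secondary structure: backbone edges `(i,i+1)` together
with the arcs, on vertices `1,…,n`. -/
def diagGraph (n : ℕ) (A : Finset (ℕ × ℕ)) : SimpleGraph ℕ where
  Adj i j := i ≠ j ∧ 1 ≤ i ∧ i ≤ n ∧ 1 ≤ j ∧ j ≤ n ∧
    (j = i + 1 ∨ i = j + 1 ∨ (i, j) ∈ A ∨ (j, i) ∈ A)
  symm := by
    constructor
    rintro i j ⟨h1, h2, h3, h4, h5, h6⟩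
    exact ⟨h1.symm, h4, h5, h2, h3, by tauto⟩
  loopless := by constructor; rintro i ⟨h1, _⟩; exact h1 rfl

/-- The 5'-3' distance of a secondary structure: the graph distance from
vertex `1` to vertex `n` in its diagram. -/
noncomputable def secDist (n : ℕ) (A : Finset (ℕ × ℕ)) : ℕ :=
  (diagGraph n A).dist 1 n

/-- `w(n,d)`: the number of secondary structures of length `n` with 5'-3' distance `d`. -/
noncomputable def wCount (n d : ℕ) : ℕ :=
  Nat.card {A : Finset (ℕ × ℕ) // IsSecStr n A ∧ secDist n A = d}

/-- The dominant singularity `ρ = (3 − √5)/2`. -/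
noncomputable def rho : ℝ := (3 - Real.sqrt 5) / 2

/-- The generating function of RNA secondary structures, in closed form. -/
noncomputable def Sfun (z : ℝ) : ℝ :=
  (1 - z + z ^ 2 - Real.sqrt ((z ^ 2 + z + 1) * (z ^ 2 - 3 * z + 1))) / (2 * z ^ 2)

/-- The bivariate generating function `W(z,u)`, in closed form. -/
noncomputable def Wfun (z u : ℝ) : ℝ :=
  u * z ^ 2 * (Sfun z - 1) /
    ((1 - z * u) ^ 2 - (1 - z * u) * (z * u) ^ 2 * (Sfun z - 1)) + z / (1 - z * u)

/-- `cov A j`: the number of arcs of `A` covering the gap between vertices `j` and `j+1`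
(equivalently, the size of the shape of the associated 1-tableau at that gap). -/
def cov (A : Finset (ℕ × ℕ)) (j : ℕ) : ℕ :=
  (A.filter (fun p => p.1 ≤ j ∧ j < p.2)).card

/-- An irreducible secondary structure: the associated tableau never returns to the
empty shape strictly between the two ends, i.e. every interior gap is covered by an arc. -/
def IsIrr (n : ℕ) (A : Finset (ℕ × ℕ)) : Prop :=
  IsSecStr n A ∧ 2 ≤ n ∧ ∀ j, 1 ≤ j → j ≤ n - 1 → 1 ≤ cov A j

/-- `i(n)`: the number of irreducible secondary structures of length `n`. -/
noncomputable def irrCount (n : ℕ) : ℕ :=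
  Nat.card {A : Finset (ℕ × ℕ) // IsIrr n A}

/-- A 1-tableau of length `n`: a sequence of one-row shapes (row lengths)
`λ_0,…,λ_n` with `λ_0 = λ_n = ∅`, consecutive shapes differing by `+□`, `−□` or
nothing, and with no consecutive `(+□,−□)` pair. -/
def IsTableau (n : ℕ) (l : Fin (n + 1) → ℕ) : Prop :=
  l 0 = 0 ∧ l (Fin.last n) = 0 ∧
  (∀ i : ℕ, ∀ _h : i < n,
    l ⟨i + 1, by omega⟩ = l ⟨i, by omega⟩ + 1 ∨
    l ⟨i + 1, by omega⟩ = l ⟨i, by omega⟩ ∨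
    l ⟨i, by omega⟩ = l ⟨i + 1, by omega⟩ + 1) ∧
  (∀ i : ℕ, ∀ _h : i + 2 ≤ n,
    ¬ (l ⟨i + 1, by omega⟩ = l ⟨i, by omega⟩ + 1 ∧
       l ⟨i + 1, by omega⟩ = l ⟨i + 2, by omega⟩ + 1))

/-! The tableau of a secondary structure `A` is `j ↦ cov A j`, the number of arcs over the gap
between `j` and `j + 1`: it goes up at arc starts, down at arc ends and stays put at isolated
vertices, and an arc `(i, i + 1)` would be exactly an (add, remove) pair. Conversely, a tableau
`L` gets an arc from each up-step `i` to the first later vertex `j` where `L` is back at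
`L (i - 1)`. Such first returns are nested or disjoint, so they form a noncrossing matching, and
the same recipe recovers `A` from `cov A`. -/

section FirstHit

variable {L : ℕ → ℕ}

lemma exists_first_eq_of_lt_of_le {a b c : ℕ}
    (hstep : ∀ t, a ≤ t → t < b → L t ≤ L (t + 1) + 1)
    (hab : a < b) (ha : c < L a) (hb : L b ≤ c) :
    ∃ j, a < j ∧ j ≤ b ∧ L j = c ∧ ∀ m, a ≤ m → m < j → c < L m := by
  have hdrop := hstep a le_rfl hab
  by_cases hnext : L (a + 1) ≤ c
  · exact ⟨a + 1, by omega, hab, by omega, fun m _ _ => by rwa [show m = a by omega]⟩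
  · obtain ⟨j, haj, hjb, hj, hmid⟩ := exists_first_eq_of_lt_of_le (a := a + 1)
      (fun t h₁ h₂ => hstep t (by omega) h₂) (by grind) (by omega) hb
    refine ⟨j, by omega, hjb, hj, fun m h₁ h₂ => ?_⟩
    rcases h₁.eq_or_lt with rfl | h₁
    · exact ha
    · exact hmid m h₁ h₂
termination_by b - a

lemma exists_last_eq_of_le_of_lt {a b c : ℕ}
    (hstep : ∀ t, a ≤ t → t < b → L (t + 1) ≤ L t + 1)
    (hab : a < b) (ha : L a ≤ c) (hb : c < L b) :
    ∃ i, a ≤ i ∧ i < b ∧ L i = c ∧ ∀ m, i < m → m ≤ b → c < L m := by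
  have hrise := hstep (b - 1) (by omega) (by omega)
  rw [Nat.sub_add_cancel (by omega)] at hrise
  by_cases hprev : L (b - 1) ≤ c
  · exact ⟨b - 1, by omega, by omega, by omega, fun m _ _ => by rwa [show m = b by omega]⟩
  · obtain ⟨i, hai, hib, hi, hmid⟩ := exists_last_eq_of_le_of_lt (b := b - 1)
      (fun t h₁ h₂ => hstep t h₁ (by omega)) (by grind) ha (by omega)
    refine ⟨i, hai, by omega, hi, fun m h₁ h₂ => ?_⟩
    rcases h₂.eq_or_lt with rfl | h₂
    · exact hb
    · exact hmid m h₁ (by omega)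
termination_by b - a

end FirstHit

/-- `IsTableau` for a sequence indexed by `ℕ`; its values beyond `n` play no role. -/
structure IsTableauPath (n : ℕ) (L : ℕ → ℕ) : Prop where
  zero : L 0 = 0
  last : L n = 0
  step : ∀ t < n, L (t + 1) = L t + 1 ∨ L (t + 1) = L t ∨ L t = L (t + 1) + 1
  no_peak : ∀ t, t + 2 ≤ n → ¬ (L (t + 1) = L t + 1 ∧ L (t + 1) = L (t + 2) + 1)

lemma isTableau_iff_isTableauPath {n : ℕ} {L : ℕ → ℕ} :
    IsTableau n (fun i : Fin (n + 1) => L i) ↔ IsTableauPath n L := by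
  constructor <;> rintro ⟨h₀, hₙ, hstep, hpeak⟩ <;> exact ⟨by simpa using h₀, hₙ, hstep, hpeak⟩

lemma cov_succ_of_isolated {A : Finset (ℕ × ℕ)} {k : ℕ} (hs : ∀ j, (k + 1, j) ∉ A)
    (he : ∀ i, (i, k + 1) ∉ A) : cov A (k + 1) = cov A k := by
  refine congrArg card (filter_congr fun ⟨a, b⟩ h => ?_)
  have := hs b
  have := he a
  grind

namespace IsSecStr

variable {n : ℕ} {A : Finset (ℕ × ℕ)}

lemma bounds (hA : IsSecStr n A) {a b : ℕ} (h : (a, b) ∈ A) :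
    1 ≤ a ∧ a < b ∧ b ≤ n ∧ b ≠ a + 1 :=
  hA.1 _ h

lemma eq_or_separated (hA : IsSecStr n A) {a b c d : ℕ} (h : (a, b) ∈ A) (h' : (c, d) ∈ A) :
    (a = c ∧ b = d) ∨ (a ≠ c ∧ a ≠ d ∧ b ≠ c ∧ b ≠ d ∧
      ¬ (a < c ∧ c < b ∧ b < d) ∧ ¬ (c < a ∧ a < d ∧ d < b)) := by
  by_cases heq : (a, b) = (c, d)
  · exact Or.inl (Prod.mk.inj heq)
  · obtain ⟨h₁, h₂, h₃, h₄⟩ := hA.2.1 _ h _ h' heq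
    exact Or.inr ⟨h₁, h₂, h₃, h₄, hA.2.2 _ h _ h', hA.2.2 _ h' _ h⟩

lemma cov_zero (hA : IsSecStr n A) : cov A 0 = 0 := by
  refine card_eq_zero.2 (filter_eq_empty_iff.2 fun ⟨a, b⟩ h => ?_)
  have := hA.bounds h
  omega

lemma cov_eq_zero_of_le (hA : IsSecStr n A) {t : ℕ} (ht : n ≤ t) : cov A t = 0 := by
  refine card_eq_zero.2 (filter_eq_empty_iff.2 fun ⟨a, b⟩ h => ?_)
  have := hA.bounds h
  omega

lemma cov_succ_of_start (hA : IsSecStr n A) {k j : ℕ} (h : (k + 1, j) ∈ A) :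
    cov A (k + 1) = cov A k + 1 := by
  have hcover : A.filter (fun p => p.1 ≤ k + 1 ∧ k + 1 < p.2) =
      insert (k + 1, j) (A.filter fun p => p.1 ≤ k ∧ k < p.2) := by
    ext ⟨a, b⟩
    by_cases hab : (a, b) ∈ A
    · have := hA.eq_or_separated hab h
      have := hA.bounds h
      simp only [mem_filter, mem_insert, Prod.mk.injEq, hab, true_and]
      omega
    · simp only [mem_filter, mem_insert, Prod.mk.injEq, hab, false_and, or_false, false_iff]
      rintro ⟨rfl, rfl⟩
      exact hab h
  rw [cov, hcover, card_insert_of_notMem (by simp)]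
  rfl

lemma cov_succ_of_end (hA : IsSecStr n A) {k i : ℕ} (h : (i, k + 1) ∈ A) :
    cov A k = cov A (k + 1) + 1 := by
  have hcover : A.filter (fun p => p.1 ≤ k ∧ k < p.2) =
      insert (i, k + 1) (A.filter fun p => p.1 ≤ k + 1 ∧ k + 1 < p.2) := by
    ext ⟨a, b⟩
    by_cases hab : (a, b) ∈ A
    · have := hA.eq_or_separated hab h
      have := hA.bounds h
      simp only [mem_filter, mem_insert, Prod.mk.injEq, hab, true_and]
      omega
    · simp only [mem_filter, mem_insert, Prod.mk.injEq, hab, false_and, or_false, false_iff]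
      rintro ⟨rfl, rfl⟩
      exact hab h
  rw [cov, hcover, card_insert_of_notMem (by simp)]
  rfl

lemma cov_succ_cases (hA : IsSecStr n A) (k : ℕ) :
    (∃ j, (k + 1, j) ∈ A) ∧ cov A (k + 1) = cov A k + 1 ∨
      (∃ i, (i, k + 1) ∈ A) ∧ cov A k = cov A (k + 1) + 1 ∨ cov A (k + 1) = cov A k := by
  by_cases hs : ∃ j, (k + 1, j) ∈ A
  · exact Or.inl ⟨hs, hA.cov_succ_of_start hs.choose_spec⟩
  by_cases he : ∃ i, (i, k + 1) ∈ A
  · exact Or.inr (Or.inl ⟨he, hA.cov_succ_of_end he.choose_spec⟩)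
  simp only [not_exists] at hs he
  exact Or.inr (Or.inr (cov_succ_of_isolated hs he))

lemma exists_start_of_cov_succ (hA : IsSecStr n A) {k : ℕ} (h : cov A (k + 1) = cov A k + 1) :
    ∃ j, (k + 1, j) ∈ A := by
  rcases hA.cov_succ_cases k with ⟨hs, -⟩ | ⟨-, h'⟩ | h' <;> first | exact hs | omega

lemma exists_end_of_cov_succ (hA : IsSecStr n A) {k : ℕ} (h : cov A k = cov A (k + 1) + 1) :
    ∃ i, (i, k + 1) ∈ A := by
  rcases hA.cov_succ_cases k with ⟨-, h'⟩ | ⟨he, -⟩ | h' <;> first | exact he | omega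

lemma isTableauPath_cov (hA : IsSecStr n A) : IsTableauPath n (cov A) where
  zero := hA.cov_zero
  last := hA.cov_eq_zero_of_le le_rfl
  step t _ := by rcases hA.cov_succ_cases t with ⟨-, h⟩ | ⟨-, h⟩ | h <;> omega
  no_peak t _ := by
    rintro ⟨hup, hdown⟩
    obtain ⟨j, hj⟩ := hA.exists_start_of_cov_succ hup
    obtain ⟨i, hi⟩ := hA.exists_end_of_cov_succ hdown
    have := hA.eq_or_separated hj hi
    have := hA.bounds hj
    have := hA.bounds hi
    omega

lemma cov_pred_eq_of_mem (hA : IsSecStr n A) {i j : ℕ} (h : (i, j) ∈ A) :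
    cov A (i - 1) = cov A j := by
  refine congrArg card (filter_congr fun ⟨a, b⟩ hab => ?_)
  have := hA.eq_or_separated hab h
  have := hA.bounds hab
  have := hA.bounds h
  dsimp only
  omega

lemma cov_lt_of_mem (hA : IsSecStr n A) {i j m : ℕ} (h : (i, j) ∈ A) (him : i ≤ m)
    (hmj : m < j) : cov A j < cov A m := by
  refine card_lt_card ⟨fun ⟨a, b⟩ hab => ?_, fun hsub => ?_⟩
  · rw [mem_filter] at hab ⊢
    have := hA.eq_or_separated hab.1 h
    have := hA.bounds h
    exact ⟨hab.1, by dsimp only at hab ⊢; omega⟩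
  · have := hsub (mem_filter.2 ⟨h, him, hmj⟩)
    rw [mem_filter] at this
    dsimp only at this
    omega

lemma mem_iff_cov (hA : IsSecStr n A) {i j : ℕ} :
    (i, j) ∈ A ↔ 1 ≤ i ∧ i < j ∧ j ≤ n ∧ cov A (i - 1) = cov A j ∧
      ∀ m, i ≤ m → m < j → cov A j < cov A m := by
  constructor
  · intro h
    have := hA.bounds h
    exact ⟨by omega, by omega, by omega, hA.cov_pred_eq_of_mem h,
      fun m => hA.cov_lt_of_mem h⟩
  · rintro ⟨hi, hij, hjn, heq, hmid⟩
    obtain ⟨k, rfl⟩ : ∃ k, i = k + 1 := ⟨i - 1, by omega⟩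
    rw [Nat.add_sub_cancel] at heq
    have hup : cov A (k + 1) = cov A k + 1 := by
      have := hA.isTableauPath_cov.step k (by omega)
      have := hmid (k + 1) le_rfl hij
      omega
    obtain ⟨b, hb⟩ := hA.exists_start_of_cov_succ hup
    obtain rfl : b = j := by
      have hret := hA.cov_pred_eq_of_mem hb
      rw [Nat.add_sub_cancel] at hret
      have := hA.bounds hb
      have := hmid b
      have := hA.cov_lt_of_mem hb (m := j)
      omega
    exact hb

end IsSecStr

def arcsOf (n : ℕ) (L : ℕ → ℕ) : Finset (ℕ × ℕ) :=
  (Icc 1 n ×ˢ Icc 1 n).filter fun p =>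
    p.1 < p.2 ∧ L (p.1 - 1) = L p.2 ∧ ∀ m ∈ Ico p.1 p.2, L p.2 < L m

lemma mem_arcsOf {n : ℕ} {L : ℕ → ℕ} {i j : ℕ} :
    (i, j) ∈ arcsOf n L ↔ 1 ≤ i ∧ i < j ∧ j ≤ n ∧ L (i - 1) = L j ∧
      ∀ m, i ≤ m → m < j → L j < L m := by
  simp only [arcsOf, mem_filter, mem_product, mem_Icc, mem_Ico]
  constructor
  · rintro ⟨⟨⟨hi, -⟩, -, hj⟩, hij, heq, hmid⟩
    exact ⟨hi, hij, hj, heq, fun m h₁ h₂ => hmid m ⟨h₁, h₂⟩⟩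
  · rintro ⟨hi, hij, hj, heq, hmid⟩
    exact ⟨⟨⟨hi, by omega⟩, by omega, hj⟩, hij, heq, fun m hm => hmid m hm.1 hm.2⟩

lemma arcsOf_nested_or_disjoint {n : ℕ} {L : ℕ → ℕ} {a b c d : ℕ}
    (h : (a, b) ∈ arcsOf n L) (h' : (c, d) ∈ arcsOf n L) (hac : a ≤ c) :
    (a = c ∧ b = d) ∨ b < c ∨ (a < c ∧ d < b) := by
  rw [mem_arcsOf] at h h'
  obtain ⟨ha, hab, -, heq, hmid⟩ := h
  obtain ⟨hc, hcd, -, heq', hmid'⟩ := h'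
  rcases hac.eq_or_lt with rfl | hac
  · have := hmid d
    have := hmid' b
    omega
  rcases lt_trichotomy b c with hbc | rfl | hcb
  · omega
  · have := hmid (b - 1) (by omega) (by omega)
    have := hmid' b le_rfl hcd
    omega
  · have := hmid (c - 1) (by omega) (by omega)
    rcases lt_trichotomy d b with hdb | rfl | hbd
    · omega
    · omega
    · have := hmid' b (by omega) hbd
      omega

namespace IsTableauPath

variable {n : ℕ} {L : ℕ → ℕ}

lemma isSecStr_arcsOf (hL : IsTableauPath n L) : IsSecStr n (arcsOf n L) := by
  refine ⟨fun ⟨i, j⟩ h => ?_, fun ⟨a, b⟩ h ⟨c, d⟩ h' hne => ?_, fun ⟨a, b⟩ h ⟨c, d⟩ h' => ?_⟩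
  · obtain ⟨hi, hij, hj, heq, hmid⟩ := mem_arcsOf.1 h
    refine ⟨hi, hij, hj, fun hj' => hL.no_peak (i - 1) (by omega) ?_⟩
    dsimp only at hj'
    subst hj'
    have := hmid i le_rfl (by omega)
    have := hL.step (i - 1) (by omega)
    rw [Nat.sub_add_cancel hi] at this ⊢
    rw [show i - 1 + 2 = i + 1 by omega]
    omega
  · simp only [ne_eq, Prod.mk.injEq] at hne ⊢
    have := (mem_arcsOf.1 h).2.1
    have := (mem_arcsOf.1 h').2.1
    rcases le_total a c with hac | hca
    · have := arcsOf_nested_or_disjoint h h' hac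
      omega
    · have := arcsOf_nested_or_disjoint h' h hca
      omega
  · dsimp only
    have := (mem_arcsOf.1 h).2.1
    have := (mem_arcsOf.1 h').2.1
    rcases le_total a c with hac | hca
    · have := arcsOf_nested_or_disjoint h h' hac
      omega
    · have := arcsOf_nested_or_disjoint h' h hca
      omega

lemma exists_start_of_up (hL : IsTableauPath n L) {k : ℕ} (hk : k < n)
    (hup : L (k + 1) = L k + 1) : ∃ j, (k + 1, j) ∈ arcsOf n L := by
  have hkn : k + 1 < n := by
    by_contra
    have := hL.last
    rw [show n = k + 1 by omega] at this
    omega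
  obtain ⟨j, hkj, hjn, hj, hmid⟩ := exists_first_eq_of_lt_of_le (L := L) (c := L k)
    (fun t _ ht => by have := hL.step t ht; omega) hkn (by omega) (by rw [hL.last]; omega)
  exact ⟨j, mem_arcsOf.2 ⟨by omega, hkj, hjn, by rw [Nat.add_sub_cancel, hj],
    fun m h₁ h₂ => hj ▸ hmid m h₁ h₂⟩⟩

lemma exists_end_of_down (hL : IsTableauPath n L) {k : ℕ} (hk : k < n)
    (hdown : L k = L (k + 1) + 1) : ∃ i, (i, k + 1) ∈ arcsOf n L := by
  have hk₀ : 0 < k := by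
    by_contra
    have := hL.zero
    rw [show k = 0 by omega] at hdown
    omega
  obtain ⟨i, -, hik, hi, hmid⟩ := exists_last_eq_of_le_of_lt (L := L) (c := L (k + 1))
    (fun t _ ht => by have := hL.step t (by omega); omega) hk₀ (by rw [hL.zero]; omega)
    (by omega)
  exact ⟨i + 1, mem_arcsOf.2 ⟨by omega, by omega, hk, by rw [Nat.add_sub_cancel, hi],
    fun m h₁ h₂ => hmid m (by omega) (by omega)⟩⟩

lemma cov_arcsOf (hL : IsTableauPath n L) {t : ℕ} (ht : t ≤ n) : cov (arcsOf n L) t = L t := by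
  have hS := hL.isSecStr_arcsOf
  induction t with
  | zero => rw [hS.cov_zero, hL.zero]
  | succ t ih =>
    have ih := ih (by omega)
    rcases hL.step t (by omega) with hup | hflat | hdown
    · obtain ⟨j, hj⟩ := hL.exists_start_of_up (by omega) hup
      rw [hS.cov_succ_of_start hj]
      omega
    · rw [cov_succ_of_isolated (fun j hj => ?_) (fun i hi => ?_), ih, hflat]
      · obtain ⟨-, hj, -, heq, hmid⟩ := mem_arcsOf.1 hj
        have := hmid (t + 1) le_rfl hj
        rw [Nat.add_sub_cancel] at heq
        omega
      · obtain ⟨-, hi, -, -, hmid⟩ := mem_arcsOf.1 hi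
        have := hmid t (by omega) (by omega)
        omega
    · obtain ⟨i, hi⟩ := hL.exists_end_of_down (by omega) hdown
      have := hS.cov_succ_of_end hi
      omega

end IsTableauPath

namespace IsSecStr

variable {n : ℕ} {A : Finset (ℕ × ℕ)}

lemma arcsOf_cov (hA : IsSecStr n A) : arcsOf n (cov A) = A := by
  ext ⟨i, j⟩
  rw [mem_arcsOf, hA.mem_iff_cov]

lemma extend_cov (hA : IsSecStr n A) :
    Function.extend Fin.val (fun i : Fin (n + 1) => cov A i) 0 = cov A := by
  funext t
  by_cases ht : t ≤ n
  · exact Fin.val_injective.extend_apply _ _ (⟨t, by omega⟩ : Fin (n + 1))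
  · rw [Function.extend_apply' _ _ _ fun ⟨i, hi⟩ => ht (hi ▸ i.is_le),
      hA.cov_eq_zero_of_le (by omega)]
    rfl

end IsSecStr

lemma IsTableau.isTableauPath_extend {n : ℕ} {l : Fin (n + 1) → ℕ} (hl : IsTableau n l) :
    IsTableauPath n (Function.extend Fin.val l 0) := by
  rw [← isTableau_iff_isTableauPath]
  simpa only [Fin.val_injective.extend_apply] using hl

noncomputable def secStrEquivTableau (n : ℕ) :
    {A : Finset (ℕ × ℕ) // IsSecStr n A} ≃ {l : Fin (n + 1) → ℕ // IsTableau n l} where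
  toFun A := ⟨fun i => cov A.1 i, isTableau_iff_isTableauPath.2 A.2.isTableauPath_cov⟩
  invFun l :=
    ⟨arcsOf n (Function.extend Fin.val l.1 0), l.2.isTableauPath_extend.isSecStr_arcsOf⟩
  left_inv A := Subtype.ext <| by
    simp only [A.2.extend_cov, A.2.arcsOf_cov]
  right_inv l := Subtype.ext <| funext fun i => by
    simp only [l.2.isTableauPath_extend.cov_arcsOf i.is_le, Fin.val_injective.extend_apply]

/-- There is a bijection between RNA secondary structures of length `n`
and 1-tableaux of length `n`. -/
theorem secStr_tableau_bijection (n : ℕ) :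
    Nonempty ({A : Finset (ℕ × ℕ) // IsSecStr n A} ≃
      {l : Fin (n + 1) → ℕ // IsTableau n l}) :=
  ⟨secStrEquivTableau n⟩
end

section
/- The generating function of irreducible RNA secondary structures satisfies Irr(z) = z^2·(S(z) − 1), where S(z) is the generating function of all RNA secondary structures (with S counting the empty structure as 1). -/
open Finset Filter Topology Asymptotics

/-!
An irreducible structure of length `n` contains the arc `(1, n)`: the gap after the arc starting
at `1` is covered only by an arc crossing it, unless that arc ends at `n`. Removing `(1, n)` and
shifting down is a bijection onto the structures of length `n - 2`, so `i(n + 2) = s(n)` for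
`n ≥ 1` and `i(0) = i(1) = i(2) = 0`, which is the identity coefficientwise.

What remains is convergence of `S` on `0 < z < ρ = φ⁻²`. Coding each right endpoint `j` as `2j`
and each left endpoint `i` as `2i + 1` gives a set of pairwise non-consecutive indices `≥ 2`, i.e.
a Zeckendorf representation of a number below `fib (2n + 2)`, and the structure can be recovered
from it, since the partner of a right endpoint is the last unmatched left endpoint before it.
Hence `s(n) ≤ fib (2n + 2) ≤ φ ^ (2n + 1)`.
-/

open Real
open scoped goldenRatio

def IsZeckendorfSet (s : Finset ℕ) : Prop := ∀ a ∈ s, 2 ≤ a ∧ a + 1 ∉ s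

namespace IsZeckendorfSet

variable {s t : Finset ℕ}

lemma isZeckendorfRep_sort (hs : IsZeckendorfSet s) : (s.sort (· ≥ ·)).IsZeckendorfRep := by
  refine List.Pairwise.isChain <| List.pairwise_append.2
    ⟨s.sortedGT_sort.pairwise.imp_of_mem fun {a b} ha hb hab => ?_, by simp, ?_⟩
  · rw [Finset.mem_sort] at ha hb
    have : b + 1 ≠ a := fun e => (hs b hb).2 (e ▸ ha)
    omega
  · simp only [Finset.mem_sort, List.mem_singleton, forall_eq, zero_add]
    exact fun a ha => (hs a ha).1

lemma sum_fib_eq (s : Finset ℕ) : ∑ k ∈ s, Nat.fib k = ((s.sort (· ≥ ·)).map Nat.fib).sum := by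
  conv_lhs => rw [← s.sort_toFinset (· ≥ ·)]
  exact List.sum_toFinset _ (s.sort_nodup _)

lemma sum_fib_lt (hs : IsZeckendorfSet s) {N : ℕ} (hN : ∀ a ∈ s, a ≤ N) :
    ∑ k ∈ s, Nat.fib k < Nat.fib (N + 1) := by
  rw [sum_fib_eq]
  refine hs.isZeckendorfRep_sort.sum_fib_lt fun a ha => ?_
  rcases List.mem_append.1 (List.mem_of_mem_head? ha) with ha | ha
  · exact Nat.lt_succ_of_le (hN a ((s.mem_sort _).1 ha))
  · rw [List.mem_singleton.1 ha]
    exact N.succ_pos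

lemma eq_of_sum_fib_eq (hs : IsZeckendorfSet s) (ht : IsZeckendorfSet t)
    (h : ∑ k ∈ s, Nat.fib k = ∑ k ∈ t, Nat.fib k) : s = t := by
  rw [sum_fib_eq, sum_fib_eq] at h
  have := congrArg Nat.zeckendorf h
  rw [Nat.zeckendorf_sum_fib hs.isZeckendorfRep_sort,
    Nat.zeckendorf_sum_fib ht.isZeckendorfRep_sort] at this
  rw [← s.sort_toFinset (· ≥ ·), this, t.sort_toFinset]

end IsZeckendorfSet

lemma fib_succ_le_goldenRatio_pow (n : ℕ) : (Nat.fib (n + 1) : ℝ) ≤ φ ^ n := by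
  have h := goldenRatio_mul_fib_succ_add_fib n
  rw [_root_.pow_succ'] at h
  have : φ * Nat.fib (n + 1) ≤ φ * φ ^ n := by linarith [(Nat.fib n).cast_nonneg (α := ℝ)]
  exact le_of_mul_le_mul_left this goldenRatio_pos

namespace IsSecStr

variable {n m : ℕ} {A B : Finset (ℕ × ℕ)}

lemma snd_eq_of_fst_eq (h : IsSecStr n A) {l r r' : ℕ} (hr : (l, r) ∈ A) (hr' : (l, r') ∈ A) :
    r = r' := by
  by_contra hne
  exact (h.2.1 _ hr _ hr' (by simpa using hne)).1 rfl

lemma snd_lt_of_nested (h : IsSecStr n A) {l r l' r' : ℕ} (hp : (l, r) ∈ A) (hq : (l', r') ∈ A)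
    (hl : l < l') (hl' : l' < r) : r' < r := by
  have hm := h.2.1 _ hp _ hq (by simp [hl.ne])
  have hc := h.2.2 _ hp _ hq
  have hb := h.1 _ hq
  simp only at hm hc hb
  omega

/-- If the arcs of `A` and `B` ending before `r` agree, then in both the partner of `r` is the last
left endpoint before `r` that is not yet matched. -/
lemma mem_of_mem_of_endpoints (hA : IsSecStr n A) (hB : IsSecStr m B)
    (hL : ∀ l, (∃ r, (l, r) ∈ A) ↔ ∃ r, (l, r) ∈ B) (hR : ∀ r, (∃ l, (l, r) ∈ A) ↔ ∃ l, (l, r) ∈ B)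
    {l r : ℕ} (ih : ∀ r' < r, ∀ l', (l', r') ∈ A ↔ (l', r') ∈ B) (h : (l, r) ∈ A) : (l, r) ∈ B := by
  obtain ⟨l', hl'⟩ := (hR r).1 ⟨l, h⟩
  rcases lt_trichotomy l l' with hlt | rfl | hlt
  · obtain ⟨r', hr'⟩ := (hL l').2 ⟨r, hl'⟩
    have hr'r := hA.snd_lt_of_nested h hr' hlt (hB.1 _ hl').2.1
    exact absurd (hB.snd_eq_of_fst_eq ((ih r' hr'r l').1 hr') hl') hr'r.ne
  · exact hl'
  · obtain ⟨r', hr'⟩ := (hL l).1 ⟨r, h⟩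
    have hr'r := hB.snd_lt_of_nested hl' hr' hlt (hA.1 _ h).2.1
    exact absurd (hA.snd_eq_of_fst_eq ((ih r' hr'r l).2 hr') h) hr'r.ne

theorem eq_of_endpoints (hA : IsSecStr n A) (hB : IsSecStr m B)
    (hL : ∀ l, (∃ r, (l, r) ∈ A) ↔ ∃ r, (l, r) ∈ B)
    (hR : ∀ r, (∃ l, (l, r) ∈ A) ↔ ∃ l, (l, r) ∈ B) : A = B := by
  have key : ∀ r l, (l, r) ∈ A ↔ (l, r) ∈ B := by
    intro r
    induction r using Nat.strong_induction_on with
    | _ r ih =>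
      exact fun l => ⟨hA.mem_of_mem_of_endpoints hB hL hR ih,
        hB.mem_of_mem_of_endpoints hA (fun l => (hL l).symm) (fun r => (hR r).symm)
          fun r' hr' l' => (ih r' hr' l').symm⟩
  ext ⟨l, r⟩
  exact key r l

end IsSecStr

def endpointCode (A : Finset (ℕ × ℕ)) : Finset ℕ :=
  A.image (fun p => 2 * p.1 + 1) ∪ A.image (fun p => 2 * p.2)

lemma odd_mem_endpointCode_iff {A : Finset (ℕ × ℕ)} {i : ℕ} :
    2 * i + 1 ∈ endpointCode A ↔ ∃ r, (i, r) ∈ A := by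
  simp only [endpointCode, Finset.mem_union, Finset.mem_image, Prod.exists]
  constructor
  · rintro (⟨l, r, h, hl⟩ | ⟨l, r, h, hr⟩)
    · exact ⟨r, by rwa [← show l = i by omega]⟩
    · omega
  · rintro ⟨r, h⟩
    exact Or.inl ⟨i, r, h, rfl⟩

lemma even_mem_endpointCode_iff {A : Finset (ℕ × ℕ)} {j : ℕ} :
    2 * j ∈ endpointCode A ↔ ∃ l, (l, j) ∈ A := by
  simp only [endpointCode, Finset.mem_union, Finset.mem_image, Prod.exists]
  constructor
  · rintro (⟨l, r, h, hl⟩ | ⟨l, r, h, hr⟩)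
    · omega
    · exact ⟨l, by rwa [← show r = j by omega]⟩
  · rintro ⟨l, h⟩
    exact Or.inr ⟨l, j, h, rfl⟩

namespace IsSecStr

variable {n : ℕ} {A B : Finset (ℕ × ℕ)}

lemma right_endpoint_not_left (h : IsSecStr n A) {l j r : ℕ} (hl : (l, j) ∈ A) :
    (j, r) ∉ A := by
  intro hr
  have := h.1 _ hl
  exact (h.2.1 _ hl _ hr (by simp only [ne_eq, Prod.mk.injEq]; omega)).2.2.1 rfl

lemma left_endpoint_not_before_right (h : IsSecStr n A) {i r l : ℕ} (hr : (i, r) ∈ A) :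
    (l, i + 1) ∉ A := by
  intro hl
  have hp := h.1 _ hr
  have hq := h.1 _ hl
  have hm := h.2.1 _ hl _ hr (by simp only [ne_eq, Prod.mk.injEq]; omega)
  have := h.2.2 _ hl _ hr
  simp only at hp hq hm this
  omega

lemma isZeckendorfSet_endpointCode (h : IsSecStr n A) : IsZeckendorfSet (endpointCode A) := by
  intro a ha
  rcases Finset.mem_union.1 ha with ha | ha <;> obtain ⟨⟨i, j⟩, hij, rfl⟩ := Finset.mem_image.1 ha
    <;> refine ⟨by have := h.1 _ hij; simp only at this ⊢; omega, ?_⟩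
  · rw [show 2 * i + 1 + 1 = 2 * (i + 1) by ring, even_mem_endpointCode_iff]
    exact fun ⟨l, hl⟩ => h.left_endpoint_not_before_right hij hl
  · rw [odd_mem_endpointCode_iff]
    exact fun ⟨r, hr⟩ => h.right_endpoint_not_left hij hr

lemma endpointCode_le (h : IsSecStr n A) : ∀ a ∈ endpointCode A, a ≤ 2 * n + 1 := by
  simp only [endpointCode, Finset.mem_union, Finset.mem_image]
  rintro a (⟨p, hp, rfl⟩ | ⟨p, hp, rfl⟩) <;> have := h.1 p hp <;> omega

lemma eq_of_endpointCode_eq (hA : IsSecStr n A) (hB : IsSecStr n B)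
    (h : endpointCode A = endpointCode B) : A = B :=
  hA.eq_of_endpoints hB (fun l => by rw [← odd_mem_endpointCode_iff, h, odd_mem_endpointCode_iff])
    fun r => by rw [← even_mem_endpointCode_iff, h, even_mem_endpointCode_iff]

end IsSecStr

theorem secCount_le_fib (n : ℕ) : secCount n ≤ Nat.fib (2 * n + 2) := by
  let code : {A // IsSecStr n A} → Fin (Nat.fib (2 * n + 2)) := fun A =>
    ⟨∑ k ∈ endpointCode A.1, Nat.fib k,
      A.2.isZeckendorfSet_endpointCode.sum_fib_lt A.2.endpointCode_le⟩
  have hcode : Function.Injective code := fun A B hAB =>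
    Subtype.ext <| A.2.eq_of_endpointCode_eq B.2 <|
      A.2.isZeckendorfSet_endpointCode.eq_of_sum_fib_eq B.2.isZeckendorfSet_endpointCode
        (Fin.val_eq_of_eq hAB)
  exact (Nat.card_le_card_of_injective code hcode).trans_eq (Nat.card_fin _)

lemma isIrr_iff {n : ℕ} {A : Finset (ℕ × ℕ)} : IsIrr n A ↔ IsSecStr n A ∧ (1, n) ∈ A := by
  constructor
  · rintro ⟨h, hn, hcov⟩
    obtain ⟨⟨l, r⟩, hp⟩ := Finset.card_pos.1 (hcov 1 le_rfl (by omega))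
    obtain ⟨hp, hl, -⟩ := Finset.mem_filter.1 hp
    obtain rfl : l = 1 := by have := h.1 _ hp; simp only at this; omega
    refine ⟨h, ?_⟩
    -- an arc covering the gap after `r` would cross `(1, r)`
    obtain rfl : r = n := by
      by_contra hrn
      have hb := h.1 _ hp
      simp only at hb
      obtain ⟨⟨l', r'⟩, hq⟩ := Finset.card_pos.1 (hcov r (by omega) (by omega))
      obtain ⟨hq, hl', hr'⟩ := Finset.mem_filter.1 hq
      have hm := h.2.1 _ hq _ hp (by simp only [ne_eq, Prod.mk.injEq]; omega)
      have hc := h.2.2 _ hp _ hq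
      have hb' := h.1 _ hq
      simp only at hm hc hb'
      omega
    exact hp
  · rintro ⟨h, hn⟩
    have hb := h.1 _ hn
    simp only at hb
    refine ⟨h, by omega, fun j hj hjn => Finset.card_pos.2 ⟨(1, n), ?_⟩⟩
    exact Finset.mem_filter.2 ⟨hn, hj, by dsimp only; omega⟩

def shiftArcs (B : Finset (ℕ × ℕ)) : Finset (ℕ × ℕ) := B.image fun p => (p.1 + 1, p.2 + 1)

def unshiftArcs (A : Finset (ℕ × ℕ)) : Finset (ℕ × ℕ) := A.image fun p => (p.1 - 1, p.2 - 1)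

lemma unshiftArcs_shiftArcs (B : Finset (ℕ × ℕ)) : unshiftArcs (shiftArcs B) = B := by
  simp [unshiftArcs, shiftArcs, Finset.image_image, Function.comp_def]

lemma shiftArcs_unshiftArcs {A : Finset (ℕ × ℕ)} (h : ∀ p ∈ A, 1 ≤ p.1 ∧ 1 ≤ p.2) :
    shiftArcs (unshiftArcs A) = A := by
  rw [shiftArcs, unshiftArcs, Finset.image_image]
  refine (Finset.image_congr fun p hp => ?_).trans A.image_id
  have := h p hp
  simp only [Function.comp_apply, id_eq]
  ext <;> simp only <;> omega

namespace IsSecStr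

variable {n : ℕ} {A B : Finset (ℕ × ℕ)}

lemma insert_shiftArcs (h : IsSecStr n B) (hn : n ≠ 0) :
    IsSecStr (n + 2) (insert (1, n + 2) (shiftArcs B)) := by
  obtain ⟨hb, hm, hc⟩ := h
  simp only [IsSecStr, shiftArcs, Finset.forall_mem_insert, Finset.forall_mem_image]
  refine ⟨⟨by omega, fun p hp => ?_⟩,
    ⟨⟨by simp, fun p hp _ => ?_⟩, fun p hp => ⟨fun _ => ?_, fun q hq hpq => ?_⟩⟩,
    ⟨by omega, fun p hp => ?_⟩, fun p hp => ⟨?_, fun q hq => ?_⟩⟩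
  all_goals try (have := hb p hp; omega)
  · have := hm p hp q hq (by rintro rfl; exact hpq rfl)
    omega
  · have := hc p hp q hq
    omega

lemma unshiftArcs_erase (h : IsSecStr (n + 2) A) (hA : (1, n + 2) ∈ A) :
    IsSecStr n (unshiftArcs (A.erase (1, n + 2))) := by
  have hb : ∀ p ∈ A.erase (1, n + 2), 2 ≤ p.1 ∧ p.1 < p.2 ∧ p.2 ≤ n + 1 ∧ p.2 ≠ p.1 + 1 := by
    intro p hp
    obtain ⟨hne, hp⟩ := Finset.mem_erase.1 hp
    have := h.1 p hp
    have := h.2.1 p hp _ hA hne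
    simp only at this
    omega
  simp only [IsSecStr, unshiftArcs, Finset.forall_mem_image]
  refine ⟨fun p hp => ?_, fun p hp q hq hpq => ?_, fun p hp q hq => ?_⟩
  · have := hb p hp
    omega
  · have := h.2.1 p (Finset.mem_of_mem_erase hp) q (Finset.mem_of_mem_erase hq)
      (by rintro rfl; exact hpq rfl)
    have := hb p hp
    have := hb q hq
    omega
  · have := h.2.2 p (Finset.mem_of_mem_erase hp) q (Finset.mem_of_mem_erase hq)
    have := hb p hp
    have := hb q hq
    omega

end IsSecStr

def irrEquivSecStr (n : ℕ) (hn : n ≠ 0) :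
    {A // IsIrr (n + 2) A} ≃ {B // IsSecStr n B} where
  toFun A := ⟨unshiftArcs (A.1.erase (1, n + 2)),
    (isIrr_iff.1 A.2).1.unshiftArcs_erase (isIrr_iff.1 A.2).2⟩
  invFun B := ⟨insert (1, n + 2) (shiftArcs B.1),
    isIrr_iff.2 ⟨B.2.insert_shiftArcs hn, Finset.mem_insert_self _ _⟩⟩
  left_inv A := by
    obtain ⟨h, hA⟩ := isIrr_iff.1 A.2
    refine Subtype.ext ?_
    dsimp only
    rw [shiftArcs_unshiftArcs, Finset.insert_erase hA]
    intro p hp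
    have := h.1 p (Finset.mem_of_mem_erase hp)
    omega
  right_inv B := by
    refine Subtype.ext ?_
    dsimp only
    rw [Finset.erase_insert, unshiftArcs_shiftArcs]
    intro hB
    obtain ⟨p, hp, hp1⟩ := Finset.mem_image.1 hB
    have := B.2.1 p hp
    simp only [Prod.mk.injEq] at hp1
    omega

lemma irrCount_add_two {n : ℕ} (hn : n ≠ 0) : irrCount (n + 2) = secCount n :=
  Nat.card_congr (irrEquivSecStr n hn)

lemma irrCount_eq_zero {n : ℕ} (hn : n < 3) : irrCount n = 0 := by
  rw [irrCount, Nat.card_eq_zero]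
  refine Or.inl ⟨fun ⟨A, hA⟩ => ?_⟩
  have := (isIrr_iff.1 hA).1.1 _ (isIrr_iff.1 hA).2
  simp only at this
  omega

lemma secCount_zero : secCount 0 = 1 := by
  rw [secCount, Nat.card_eq_one_iff_exists]
  refine ⟨⟨∅, by simp [IsSecStr]⟩, fun ⟨A, hA⟩ => Subtype.ext ?_⟩
  refine Finset.eq_empty_of_forall_notMem fun p hp => ?_
  have := hA.1 p hp
  omega

lemma rho_eq_goldenConj_sq : rho = ψ ^ 2 := by
  have h5 : √5 ^ 2 = 5 := Real.sq_sqrt (by norm_num)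
  rw [rho, goldenConj]
  linear_combination (-1 / 4 : ℝ) * h5

theorem summable_secCount_mul_pow {z : ℝ} (hz : |z| < rho) :
    Summable fun n => (secCount n : ℝ) * z ^ n := by
  have hr : φ ^ 2 * |z| < 1 := by
    calc φ ^ 2 * |z| < φ ^ 2 * ψ ^ 2 := by rw [← rho_eq_goldenConj_sq]; gcongr
      _ = 1 := by rw [← mul_pow, goldenRatio_mul_goldenConj]; norm_num
  refine Summable.of_norm_bounded
    ((summable_geometric_of_lt_one (by positivity) hr).mul_left φ) fun n => ?_
  calc ‖(secCount n : ℝ) * z ^ n‖ = secCount n * |z| ^ n := by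
        simp only [norm_mul, norm_pow, Real.norm_eq_abs, Nat.abs_cast]
    _ ≤ φ ^ (2 * n + 1) * |z| ^ n := by
        gcongr
        exact (Nat.cast_le.2 (secCount_le_fib n)).trans (fib_succ_le_goldenRatio_pow _)
    _ = φ * (φ ^ 2 * |z|) ^ n := by rw [mul_pow, ← pow_mul, pow_succ', mul_assoc]

/-- `Irr(z) = z²·(S(z) − 1)`. -/
theorem irr_gf_eq (z : ℝ) (hz0 : 0 < z) (hz1 : z < rho) :
    ∑' n : ℕ, (irrCount n : ℝ) * z ^ n =
      z ^ 2 * ((∑' n : ℕ, (secCount n : ℝ) * z ^ n) - 1) := by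
  have hS := summable_secCount_mul_pow (z := z) (by rwa [abs_of_pos hz0])
  have hIrr : ∑' k, (irrCount (k + 3) : ℝ) * z ^ (k + 3) = ∑' n, (irrCount n : ℝ) * z ^ n := by
    refine (add_left_injective 3).tsum_eq (f := fun n => (irrCount n : ℝ) * z ^ n)
      fun n hn => ⟨n - 3, Nat.sub_add_cancel ?_⟩
    by_contra h
    exact hn (by simp [irrCount_eq_zero (not_le.1 h)])
  rw [← hIrr, hS.tsum_eq_zero_add, secCount_zero, Nat.cast_one, pow_zero, one_mul,
    add_sub_cancel_left, ← tsum_mul_left]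
  refine tsum_congr fun k => ?_
  rw [irrCount_add_two k.succ_ne_zero]
  ring
end

section
/- The numbers s(n) of RNA secondary structures satisfy the recursion s(n+1) = s(n) + Σ_{k=0}^{n-2} s(k)·s(n−1−k) for n ≥ 1, with s(0) = s(1) = s(2) = 1. -/
open Finset Filter Topology Asymptotics

/-!
Vertex `n + 1` is either unpaired, leaving a structure on `1, …, n`, or paired with some
`k + 1 ≤ n - 1`. Since arcs do not cross, the arc `(k + 1, n + 1)` then separates a structure on
`1, …, k` from one on `k + 2, …, n`, which translated by `k + 1` is a structure of length
`n - 1 - k`; conversely any such pair glues back together along the arc.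
-/

instance (n : ℕ) (A : Finset (ℕ × ℕ)) : Decidable (IsSecStr n A) := by
  unfold IsSecStr; infer_instance

def secFinset (n : ℕ) : Finset (Finset (ℕ × ℕ)) :=
  ((Icc 1 n ×ˢ Icc 1 n).powerset).filter (IsSecStr n)

lemma mem_secFinset {n : ℕ} {A : Finset (ℕ × ℕ)} : A ∈ secFinset n ↔ IsSecStr n A := by
  simp only [secFinset, mem_filter, mem_powerset, and_iff_right_iff_imp]
  intro hA p hp
  have := hA.1 p hp
  simp only [mem_product, mem_Icc]
  omega

lemma secCount_eq_card (n : ℕ) : secCount n = #(secFinset n) := by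
  rw [secCount, Nat.card_congr (Equiv.subtypeEquivRight fun A => mem_secFinset.symm)]
  exact Nat.card_eq_finsetCard _

def shiftArc (m : ℕ) : ℕ × ℕ ↪ ℕ × ℕ :=
  (addRightEmbedding m).prodMap (addRightEmbedding m)

@[simp]
lemma shiftArc_apply (m : ℕ) (p : ℕ × ℕ) : shiftArc m p = (p.1 + m, p.2 + m) := rfl

noncomputable def unshift (m : ℕ) (A : Finset (ℕ × ℕ)) : Finset (ℕ × ℕ) :=
  A.preimage (shiftArc m) (shiftArc m).injective.injOn

@[simp]
lemma mem_unshift {m : ℕ} {A : Finset (ℕ × ℕ)} {p : ℕ × ℕ} :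
    p ∈ unshift m A ↔ (p.1 + m, p.2 + m) ∈ A :=
  mem_preimage

namespace IsSecStr

variable {n m : ℕ} {A B : Finset (ℕ × ℕ)}

lemma of_subset (hA : IsSecStr n A) (hBA : B ⊆ A) (hB : ∀ p ∈ B, p.2 ≤ m) : IsSecStr m B := by
  refine ⟨fun p hp => ?_, fun p hp q hq => hA.2.1 p (hBA hp) q (hBA hq),
    fun p hp q hq => hA.2.2 p (hBA hp) q (hBA hq)⟩
  have := hA.1 p (hBA hp)
  have := hB p hp
  omega

lemma union (hA : IsSecStr n A) (hB : IsSecStr n B) (hAB : ∀ p ∈ A, ∀ q ∈ B, p.2 < q.1) :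
    IsSecStr n (A ∪ B) := by
  refine ⟨fun p hp => ?_, fun p hp q hq hpq => ?_, fun p hp q hq => ?_⟩
  · rcases mem_union.1 hp with hp | hp
    exacts [hA.1 p hp, hB.1 p hp]
  all_goals
    rcases mem_union.1 hp with hp | hp <;> rcases mem_union.1 hq with hq | hq
  · exact hA.2.1 p hp q hq hpq
  · have := hA.1 p hp; have := hB.1 q hq; have := hAB p hp q hq; omega
  · have := hB.1 p hp; have := hA.1 q hq; have := hAB q hq p hp; omega
  · exact hB.2.1 p hp q hq hpq
  · exact hA.2.2 p hp q hq
  · have := hA.1 p hp; have := hB.1 q hq; have := hAB p hp q hq; omega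
  · have := hB.1 p hp; have := hA.1 q hq; have := hAB q hq p hp; omega
  · exact hB.2.2 p hp q hq

lemma insert {i j : ℕ} (hA : IsSecStr n A) (hij : 1 ≤ i ∧ i < j ∧ j ≤ n ∧ j ≠ i + 1)
    (hcompat : ∀ p ∈ A, p.2 < i ∨ j < p.1 ∨ (i < p.1 ∧ p.2 < j) ∨ (p.1 < i ∧ j < p.2)) :
    IsSecStr n (insert (i, j) A) := by
  refine ⟨fun p hp => ?_, fun p hp q hq hpq => ?_, fun p hp q hq => ?_⟩
  · rcases mem_insert.1 hp with rfl | hp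
    exacts [hij, hA.1 p hp]
  all_goals
    rcases mem_insert.1 hp with rfl | hp <;> rcases mem_insert.1 hq with rfl | hq
  · exact absurd rfl hpq
  · have := hA.1 q hq; have := hcompat q hq; omega
  · have := hA.1 p hp; have := hcompat p hp; omega
  · exact hA.2.1 p hp q hq hpq
  · omega
  · have := hA.1 q hq; have := hcompat q hq; omega
  · have := hA.1 p hp; have := hcompat p hp; omega
  · exact hA.2.2 p hp q hq

lemma map_shiftArc (hA : IsSecStr n A) : IsSecStr (n + m) (A.map (shiftArc m)) := by
  simp only [IsSecStr, forall_mem_map, shiftArc_apply]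
  refine ⟨fun p hp => ?_, fun p hp q hq hpq => ?_, fun p hp q hq => ?_⟩
  · have := hA.1 p hp; omega
  · have := hA.2.1 p hp q hq (by rintro rfl; exact hpq rfl); omega
  · have := hA.2.2 p hp q hq; omega

lemma unshift (hA : IsSecStr (m + n) A) (hm : ∀ p ∈ A, p.1 ≠ m) : IsSecStr n (unshift m A) := by
  simp only [IsSecStr, mem_unshift]
  refine ⟨fun p hp => ?_, fun p hp q hq hpq => ?_, fun p hp q hq => ?_⟩
  · have := hA.1 _ hp; have := hm _ hp; omega
  · have := hA.2.1 _ hp _ hq (by simpa [Prod.ext_iff] using hpq); omega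
  · have := hA.2.2 _ hp _ hq; omega

end IsSecStr

lemma map_shiftArc_unshift (m : ℕ) (A : Finset (ℕ × ℕ)) :
    (unshift m A).map (shiftArc m) = A.filter fun p => m ≤ p.1 ∧ m ≤ p.2 := by
  ext ⟨i, j⟩
  simp only [Finset.mem_map, mem_unshift, shiftArc_apply, mem_filter, Prod.exists, Prod.mk.injEq]
  constructor
  · rintro ⟨x, y, hA, rfl, rfl⟩
    exact ⟨hA, by omega, by omega⟩
  · rintro ⟨hA, hi, hj⟩
    exact ⟨i - m, j - m, by rwa [Nat.sub_add_cancel hi, Nat.sub_add_cancel hj], by omega, by omega⟩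

def pairedFinset (N i : ℕ) : Finset (Finset (ℕ × ℕ)) :=
  (secFinset N).filter fun A => (i, N) ∈ A

lemma mem_pairedFinset {N i : ℕ} {A : Finset (ℕ × ℕ)} :
    A ∈ pairedFinset N i ↔ IsSecStr N A ∧ (i, N) ∈ A := by
  rw [pairedFinset, mem_filter, mem_secFinset]

section ArcSplit

variable {a b : ℕ} {A B C : Finset (ℕ × ℕ)}

def glue (a b : ℕ) (B C : Finset (ℕ × ℕ)) : Finset (ℕ × ℕ) :=
  insert (a + 1, a + b + 2) (B ∪ C.map (shiftArc (a + 1)))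

noncomputable def cut (a b : ℕ) (A : Finset (ℕ × ℕ)) : Finset (ℕ × ℕ) × Finset (ℕ × ℕ) :=
  (A.filter (·.2 ≤ a), unshift (a + 1) (A.filter (·.2 ≤ a + b + 1)))

lemma IsSecStr.left_or_under_of_mem (hA : IsSecStr (a + b + 2) A) (harc : (a + 1, a + b + 2) ∈ A)
    {p : ℕ × ℕ} (hp : p ∈ A) (hne : p ≠ (a + 1, a + b + 2)) :
    p.2 ≤ a ∨ (a + 2 ≤ p.1 ∧ p.2 ≤ a + b + 1) := by
  have := hA.1 p hp
  have := hA.2.1 p hp _ harc hne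
  have := hA.2.2 p hp _ harc
  omega

lemma IsSecStr.glue (hB : IsSecStr a B) (hC : IsSecStr b C) (hb : 1 ≤ b) :
    IsSecStr (a + b + 2) (glue a b B C) := by
  have hB' : IsSecStr (a + b + 2) B :=
    hB.of_subset subset_rfl fun p hp => by have := hB.1 p hp; omega
  have hC' : IsSecStr (a + b + 2) (C.map (shiftArc (a + 1))) :=
    (hC.map_shiftArc (m := a + 1)).of_subset subset_rfl fun p hp => by
      obtain ⟨q, hq, rfl⟩ := Finset.mem_map.1 hp
      have := hC.1 q hq
      simp only [shiftArc_apply]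
      omega
  refine (hB'.union hC' fun p hp q hq => ?_).insert (by omega) fun p hp => ?_
  · obtain ⟨r, hr, rfl⟩ := Finset.mem_map.1 hq
    have := hB.1 p hp
    have := hC.1 r hr
    simp only [shiftArc_apply]
    omega
  · rcases mem_union.1 hp with hp | hp
    · have := hB.1 p hp; omega
    · obtain ⟨r, hr, rfl⟩ := Finset.mem_map.1 hp
      have := hC.1 r hr
      simp only [shiftArc_apply]
      omega

lemma IsSecStr.cut_fst (hA : IsSecStr (a + b + 2) A) : IsSecStr a (cut a b A).1 :=
  hA.of_subset (filter_subset _ _) fun _ hp => (mem_filter.1 hp).2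

lemma IsSecStr.cut_snd (hA : IsSecStr (a + b + 2) A) (harc : (a + 1, a + b + 2) ∈ A) :
    IsSecStr b (cut a b A).2 := by
  have hlow : IsSecStr (a + 1 + b) (A.filter (·.2 ≤ a + b + 1)) :=
    hA.of_subset (filter_subset _ _) fun p hp => by have := (mem_filter.1 hp).2; omega
  refine hlow.unshift fun p hp => ?_
  obtain ⟨hp, hpb⟩ := mem_filter.1 hp
  exact (hA.2.1 p hp _ harc (by rintro rfl; simp at hpb)).1

lemma glue_cut (hA : IsSecStr (a + b + 2) A) (harc : (a + 1, a + b + 2) ∈ A) :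
    glue a b (cut a b A).1 (cut a b A).2 = A := by
  ext p
  simp only [glue, cut, map_shiftArc_unshift, mem_insert, mem_union, mem_filter]
  constructor
  · rintro (rfl | ⟨hp, -⟩ | ⟨⟨hp, -⟩, -⟩) <;> assumption
  · intro hp
    by_cases hne : p = (a + 1, a + b + 2)
    · exact .inl hne
    · have := hA.1 p hp
      rcases hA.left_or_under_of_mem harc hp hne with h | h
      · exact .inr (.inl ⟨hp, h⟩)
      · exact .inr (.inr ⟨⟨hp, h.2⟩, by omega, by omega⟩)

lemma cut_glue (hB : IsSecStr a B) (hC : IsSecStr b C) : cut a b (glue a b B C) = (B, C) := by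
  ext p
  · simp only [cut, glue, mem_filter, mem_insert, mem_union, Finset.mem_map, shiftArc_apply]
    constructor
    · rintro ⟨rfl | h | ⟨q, -, rfl⟩, hp⟩
      · omega
      · exact h
      · omega
    · intro hp
      exact ⟨.inr (.inl hp), (hB.1 p hp).2.2.1⟩
  · have hmap : (p.1 + (a + 1), p.2 + (a + 1)) ∈ C.map (shiftArc (a + 1)) ↔ p ∈ C :=
      Finset.mem_map' _
    simp only [cut, glue, mem_unshift, mem_filter, mem_insert, mem_union, hmap]
    constructor
    · rintro ⟨h | h | h, hp⟩
      · simp only [Prod.ext_iff] at h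
        omega
      · have := hB.1 _ h
        omega
      · exact h
    · intro hp
      have := hC.1 p hp
      exact ⟨.inr (.inr hp), by omega⟩

lemma card_pairedFinset (hb : 1 ≤ b) :
    #(pairedFinset (a + b + 2) (a + 1)) = #(secFinset a) * #(secFinset b) := by
  rw [← card_product]
  refine card_nbij' (cut a b) (fun P => glue a b P.1 P.2) ?_ ?_ ?_ ?_ <;>
    simp only [Set.MapsTo, Set.LeftInvOn, Set.RightInvOn, mem_coe, mem_pairedFinset,
      mem_product, mem_secFinset]
  · exact fun A hA => ⟨hA.1.cut_fst, hA.1.cut_snd hA.2⟩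
  · exact fun P hP => ⟨hP.1.glue hP.2 hb, mem_insert_self _ _⟩
  · exact fun A hA => glue_cut hA.1 hA.2
  · exact fun P hP => cut_glue hP.1 hP.2

end ArcSplit

lemma disjoint_pairedFinset {N i j : ℕ} (hij : i ≠ j) :
    Disjoint (pairedFinset N i) (pairedFinset N j) := by
  refine disjoint_left.2 fun A hi hj => ?_
  rw [mem_pairedFinset] at hi hj
  exact (hi.1.2.1 _ hi.2 _ hj.2 (by simpa using hij)).2.2.2 rfl

lemma filter_lastUnpaired (n : ℕ) :
    (secFinset (n + 1)).filter (fun A => ¬ ∃ p ∈ A, p.2 = n + 1) = secFinset n := by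
  ext A
  simp only [mem_filter, mem_secFinset, not_exists, not_and]
  constructor
  · rintro ⟨hA, hlast⟩
    refine hA.of_subset subset_rfl fun p hp => ?_
    have := hA.1 p hp
    have := hlast p hp
    omega
  · intro hA
    refine ⟨hA.of_subset subset_rfl fun p hp => ?_, fun p hp => ?_⟩ <;>
    · have := hA.1 p hp
      omega

lemma filter_lastPaired (n : ℕ) :
    (secFinset (n + 1)).filter (fun A => ∃ p ∈ A, p.2 = n + 1) =
      (range (n - 1)).biUnion fun k => pairedFinset (n + 1) (k + 1) := by
  ext A
  simp only [mem_filter, mem_biUnion, mem_range, mem_pairedFinset, mem_secFinset]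
  constructor
  · rintro ⟨hA, ⟨i, _⟩, hp, rfl⟩
    have := hA.1 _ hp
    exact ⟨i - 1, by omega, hA, by rwa [Nat.sub_add_cancel this.1]⟩
  · rintro ⟨k, -, hA, hk⟩
    exact ⟨hA, _, hk, rfl⟩

/-- Waterman's recursion
`s(n+1) = s(n) + Σ_{k=0}^{n−2} s(k)s(n−1−k)` for `n ≥ 1`, with `s(0)=s(1)=s(2)=1`. -/
theorem secCount_recursion :
    secCount 0 = 1 ∧ secCount 1 = 1 ∧ secCount 2 = 1 ∧
    ∀ n : ℕ, 1 ≤ n →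
      secCount (n + 1) =
        secCount n + ∑ k ∈ Finset.range (n - 1), secCount k * secCount (n - 1 - k) := by
  refine ⟨by rw [secCount_eq_card]; decide, by rw [secCount_eq_card]; decide,
    by rw [secCount_eq_card]; decide, fun n _ => ?_⟩
  simp only [secCount_eq_card]
  rw [← card_filter_add_card_filter_not (fun A => ∃ p ∈ A, p.2 = n + 1), filter_lastUnpaired,
    filter_lastPaired, card_biUnion fun k _ l _ hkl => disjoint_pairedFinset (by omega), add_comm]
  congr 1
  refine sum_congr rfl fun k hk => ?_
  rw [mem_range] at hk
  have hsplit : n + 1 = k + (n - 1 - k) + 2 := by omega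
  rw [hsplit, card_pairedFinset (by omega)]
end

section
/- The singular expansion of S(z) at ρ = (3 − √5)/2 is S(z) = 2/(3 − √5) − √(8(3√5 − 5)(ρ − z))/(3 − √5)^2 + O(ρ − z) as z → ρ. -/
open Finset Filter Topology Asymptotics

/-!
Since `z² − 3z + 1 = (ρ' − z)(ρ − z)` with `ρ' = (3 + √5)/2`, for `z ≤ ρ` the square root in
`S` splits as `S(z) = A(z) − B(z) √(ρ − z)`, where `A` and `B` are differentiable at `ρ`.
Replacing `A(z)` and `B(z)` by their values at `ρ` costs `O(ρ − z)`, and the constant term and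
the coefficient of `√(ρ − z)` are `A(ρ) = 2/(3 − √5)` and `B(ρ) = √(8(3√5 − 5))/(3 − √5)²`.
-/

section SquareRootSingularity

variable {f A B : ℝ → ℝ} {a : ℝ}

theorem DifferentiableAt.isBigO_sub_rev (hA : DifferentiableAt ℝ A a) :
    (fun z => A z - A a) =O[𝓝 a] (fun z => a - z) := by
  refine hA.hasFDerivAt.isBigO_sub.trans (isBigO_neg_right.mp ?_)
  simpa only [neg_sub] using isBigO_refl (fun z => z - a) (𝓝 a)

theorem isBigO_sub_sqrt_expansion (hA : DifferentiableAt ℝ A a) (hB : DifferentiableAt ℝ B a)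
    (hf : ∀ᶠ z in 𝓝[<] a, f z = A z - B z * √(a - z)) :
    (fun z => f z - (A a - B a * √(a - z))) =O[𝓝[<] a] (fun z => a - z) := by
  have hsqrt : (fun z => √(a - z)) =O[𝓝 a] (fun _ => (1 : ℝ)) :=
    (Continuous.tendsto (by fun_prop) a).isBigO_one ℝ
  have hmain := hA.isBigO_sub_rev.sub (by simpa using hB.isBigO_sub_rev.mul hsqrt)
  refine (hmain.mono nhdsWithin_le_nhds).congr' ?_ EventuallyEq.rfl
  filter_upwards [hf] with z hz
  rw [hz]
  ring

end SquareRootSingularity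

noncomputable def rhoConj : ℝ := (3 + √5) / 2

theorem sq_sub_three_mul_add_one_eq (z : ℝ) : z ^ 2 - 3 * z + 1 = (rhoConj - z) * (rho - z) := by
  unfold rhoConj rho
  linear_combination (1 / 4 : ℝ) * Real.sq_sqrt (show (0 : ℝ) ≤ 5 by norm_num)

theorem rho_lt_rhoConj : rho < rhoConj := by
  unfold rho rhoConj
  linarith [Real.sqrt_pos.mpr (show (0 : ℝ) < 5 by norm_num)]

theorem two_lt_sqrt_five : 2 < √5 := by
  rw [Real.lt_sqrt (by norm_num)]
  norm_num

theorem sqrt_five_lt_three : √5 < 3 := by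
  rw [Real.sqrt_lt' (by norm_num)]
  norm_num

theorem rho_pos : 0 < rho := by
  unfold rho
  linarith [sqrt_five_lt_three]

noncomputable def sfunRegularPart (z : ℝ) : ℝ := (1 - z + z ^ 2) / (2 * z ^ 2)

noncomputable def sfunSqrtCoeff (z : ℝ) : ℝ :=
  √((z ^ 2 + z + 1) * (rhoConj - z)) / (2 * z ^ 2)

theorem Sfun_eq_sub_mul_sqrt {z : ℝ} (hz : z ≤ rho) :
    Sfun z = sfunRegularPart z - sfunSqrtCoeff z * √(rho - z) := by
  have hpos : 0 ≤ (z ^ 2 + z + 1) * (rhoConj - z) :=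
    mul_nonneg (by nlinarith [sq_nonneg (z + 1 / 2)]) (by linarith [rho_lt_rhoConj])
  rw [Sfun, sfunRegularPart, sfunSqrtCoeff, sq_sub_three_mul_add_one_eq, ← mul_assoc,
    Real.sqrt_mul hpos]
  ring

theorem sfunRegularPart_rho : sfunRegularPart rho = 2 / (3 - √5) := by
  have hlt := sqrt_five_lt_three
  rw [sfunRegularPart, rho, div_eq_div_iff (by positivity) (by linarith)]
  linear_combination (3 / 4 - √5 / 4) * Real.sq_sqrt (show (0 : ℝ) ≤ 5 by norm_num)

theorem sfunSqrtCoeff_rho : sfunSqrtCoeff rho = √(8 * (3 * √5 - 5)) / (3 - √5) ^ 2 := by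
  have harg : (rho ^ 2 + rho + 1) * (rhoConj - rho) = 2 * (3 * √5 - 5) := by
    rw [rho, rhoConj]
    linear_combination (√5 / 4 - 2) * Real.sq_sqrt (show (0 : ℝ) ≤ 5 by norm_num)
  have h8 : √(8 * (3 * √5 - 5)) = 2 * √(2 * (3 * √5 - 5)) := by
    rw [show (8 : ℝ) * (3 * √5 - 5) = 2 ^ 2 * (2 * (3 * √5 - 5)) by ring,
      Real.sqrt_mul (by norm_num), Real.sqrt_sq (by norm_num)]
  rw [sfunSqrtCoeff, harg, h8, rho]
  field_simp

theorem differentiableAt_sfunRegularPart : DifferentiableAt ℝ sfunRegularPart rho := by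
  unfold sfunRegularPart
  fun_prop (disch := positivity [rho_pos])

theorem differentiableAt_sfunSqrtCoeff : DifferentiableAt ℝ sfunSqrtCoeff rho := by
  have hpos : 0 < (rho ^ 2 + rho + 1) * (rhoConj - rho) :=
    mul_pos (by positivity [rho_pos]) (sub_pos.mpr rho_lt_rhoConj)
  unfold sfunSqrtCoeff
  fun_prop (disch := first | exact hpos.ne' | positivity [rho_pos])

/-- The singular expansion of `S(z)` at `ρ = (3−√5)/2`:
`S(z) = 2/(3−√5) − √(8(3√5−5)(ρ−z))/(3−√5)² + O(ρ−z)` as `z → ρ⁻`. -/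
theorem S_singular_expansion :
    (fun z : ℝ => Sfun z -
        (2 / (3 - Real.sqrt 5) -
          Real.sqrt (8 * (3 * Real.sqrt 5 - 5) * (rho - z)) / (3 - Real.sqrt 5) ^ 2))
      =O[nhdsWithin rho (Set.Iio rho)] (fun z : ℝ => rho - z) := by
  have hS : ∀ᶠ z in 𝓝[<] rho, Sfun z = sfunRegularPart z - sfunSqrtCoeff z * √(rho - z) :=
    eventually_nhdsWithin_of_forall fun z hz => Sfun_eq_sub_mul_sqrt (le_of_lt hz)
  refine (isBigO_sub_sqrt_expansion differentiableAt_sfunRegularPart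
    differentiableAt_sfunSqrtCoeff hS).congr_left fun z => ?_
  have hc : 0 ≤ 8 * (3 * √5 - 5) := by linarith [two_lt_sqrt_five]
  rw [sfunRegularPart_rho, sfunSqrtCoeff_rho, Real.sqrt_mul hc]
  ring
end

section
/- Suppose P_n(u) = Σ_{d≥0} p(n,d) u^d and Q(u) = Σ_{d≥0} q(d) u^d are probability generating functions (p(n,d), q(d) ≥ 0 summing to at most 1), and P_n(u) → Q(u) pointwise for all u in a subset Ω of the open unit disc having an accumulation point in the interior of the disc. Then for every fixed d, p(n,d) → q(d) and Σ_{j≤d} p(n,j) → Σ_{j≤d} q(j) as n → ∞. -/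
/-!
The coefficient sequences lie in the cube `[-1,1]^ℕ`, compact in the product topology, on which
each evaluation `r ↦ ∑ r_d u^d` with `|u| < 1` is continuous by the Weierstrass M-test. Hence
every cluster point `r` of `(p n)_n` has `∑ r_d u^d = Q(u)` on `Ω`, and the identity theorem on
the unit disc forces `r = q`. A sequence in a compact set with a unique cluster point converges,
and convergence in the product topology is coordinatewise.
-/

open Filter Topology

noncomputable def pgf (r : ℕ → ℝ) (u : ℂ) : ℂ := ∑' d, (r d : ℂ) * u ^ d

lemma isCompact_setOf_forall_norm_le {ι E : Type*} [NormedAddCommGroup E] [ProperSpace E]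
    (C : ℝ) : IsCompact {r : ι → E | ∀ i, ‖r i‖ ≤ C} := by
  simpa [Set.pi, mem_closedBall_zero_iff] using
    isCompact_univ_pi fun _ : ι => isCompact_closedBall (0 : E) C

lemma hasFPowerSeriesOnBall_pgf {r : ℕ → ℝ} {C : ℝ} (hr : ∀ d, ‖r d‖ ≤ C) :
    HasFPowerSeriesOnBall (pgf r) (.ofScalars ℂ fun d => (r d : ℂ)) 0 1 := by
  set P := FormalMultilinearSeries.ofScalars ℂ fun d => (r d : ℂ)
  have hrad : ((1 : NNReal) : ENNReal) ≤ P.radius :=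
    P.le_radius_of_bound C fun d => by
      simpa [P, FormalMultilinearSeries.ofScalars_norm] using hr d
  have hsum : P.sum = pgf r := by
    ext u
    simpa [P, pgf, FormalMultilinearSeries.ofScalarsSum, smul_eq_mul] using
      FormalMultilinearSeries.ofScalars_sum_eq (fun d => (r d : ℂ)) u
  simpa [hsum] using (P.hasFPowerSeriesOnBall (one_pos.trans_le hrad)).mono one_pos hrad

lemma analyticOnNhd_pgf {r : ℕ → ℝ} {C : ℝ} (hr : ∀ d, ‖r d‖ ≤ C) :
    AnalyticOnNhd ℂ (pgf r) (Metric.ball 0 1) := by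
  simpa only [← ENNReal.ofReal_one, Metric.eball_ofReal] using
    (hasFPowerSeriesOnBall_pgf hr).analyticOnNhd

lemma eq_of_pgf_eqOn {r s : ℕ → ℝ} {C : ℝ} (hr : ∀ d, ‖r d‖ ≤ C) (hs : ∀ d, ‖s d‖ ≤ C)
    {Ω : Set ℂ} {a : ℂ} (ha : a ∈ Metric.ball 0 1) (hacc : AccPt a (𝓟 Ω))
    (heq : Set.EqOn (pgf r) (pgf s) Ω) : r = s := by
  have hfreq : ∃ᶠ z in 𝓝[≠] a, pgf r z = pgf s z :=
    frequently_nhdsWithin_iff.2 <| (accPt_iff_frequently.1 hacc).mono fun z hz => ⟨heq hz.2, hz.1⟩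
  have hball := (analyticOnNhd_pgf hr).eqOn_of_preconnected_of_frequently_eq
    (analyticOnNhd_pgf hs) (convex_ball (0 : ℂ) 1).isPreconnected ha hfreq
  have hnhds : pgf r =ᶠ[𝓝 0] pgf s :=
    eventuallyEq_of_mem (Metric.isOpen_ball.mem_nhds (Metric.mem_ball_self one_pos)) hball
  have hcoeff := FormalMultilinearSeries.ofScalars_series_injective ℂ ℂ <|
    ((hasFPowerSeriesOnBall_pgf hr).hasFPowerSeriesAt.congr hnhds).eq_formalMultilinearSeries
      (hasFPowerSeriesOnBall_pgf hs).hasFPowerSeriesAt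
  ext d
  exact_mod_cast congrFun hcoeff d

lemma continuousOn_pgf {u : ℂ} (hu : ‖u‖ < 1) (C : ℝ) :
    ContinuousOn (fun r => pgf r u) {r : ℕ → ℝ | ∀ d, ‖r d‖ ≤ C} := by
  refine continuousOn_tsum (u := fun d => C * ‖u‖ ^ d)
    (fun d => ((Complex.continuous_ofReal.comp (continuous_apply d)).mul
      continuous_const).continuousOn)
    ((summable_geometric_of_lt_one (norm_nonneg u) hu).mul_left C) fun d r hr => ?_
  rw [norm_mul, norm_pow, Complex.norm_real]
  exact mul_le_mul_of_nonneg_right (hr d) (by positivity)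

theorem tendsto_of_tendsto_pgf {ι : Type*} {l : Filter ι} {p : ι → ℕ → ℝ} {q : ℕ → ℝ} {C : ℝ}
    (hp : ∀ i d, ‖p i d‖ ≤ C) (hq : ∀ d, ‖q d‖ ≤ C)
    {Ω : Set ℂ} (hΩ : Ω ⊆ Metric.ball 0 1) {a : ℂ} (ha : a ∈ Metric.ball 0 1)
    (hacc : AccPt a (𝓟 Ω)) (hconv : ∀ u ∈ Ω, Tendsto (fun i => pgf (p i) u) l (𝓝 (pgf q u))) :
    Tendsto p l (𝓝 q) := by
  have hmem : ∀ᶠ i in l, p i ∈ {r | ∀ d, ‖r d‖ ≤ C} := .of_forall hp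
  refine (isCompact_setOf_forall_norm_le C).tendsto_nhds_of_unique_mapClusterPt hmem
    fun r hr hcl => eq_of_pgf_eqOn hr hq ha hacc fun u hu => ?_
  have hcont : Tendsto (fun r => pgf r u) (𝓝 r ⊓ map p l) (𝓝 (pgf r u)) :=
    (continuousOn_pgf (mem_ball_zero_iff.1 (hΩ hu)) C r hr).mono_left
      (inf_le_inf_left _ (le_principal_iff.2 hmem))
  exact eq_of_nhds_neBot <| (hcl.tendsto_comp' hcont).clusterPt.mono (hconv u hu)

/-- continuity theorem for probability generating functions.
If the probability generating functions `P_n` converge pointwise to `Q` on a subset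
`Ω` of the open unit disc with an accumulation point inside the disc, then the
coefficients and partial sums converge. -/
theorem pgf_continuity (p : ℕ → ℕ → ℝ) (q : ℕ → ℝ)
    (hp : ∀ n d, 0 ≤ p n d) (hq : ∀ d, 0 ≤ q d)
    (hpsum : ∀ n, Summable (p n) ∧ ∑' d, p n d ≤ 1)
    (hqsum : Summable q ∧ ∑' d, q d ≤ 1)
    (Ω : Set ℂ) (hΩ : Ω ⊆ Metric.ball (0 : ℂ) 1)
    (hacc : ∃ a ∈ Metric.ball (0 : ℂ) 1, AccPt a (Filter.principal Ω))
    (hconv : ∀ u ∈ Ω,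
      Tendsto (fun n : ℕ => ∑' d : ℕ, (p n d : ℂ) * u ^ d)
        atTop (nhds (∑' d : ℕ, (q d : ℂ) * u ^ d))) :
    ∀ d : ℕ,
      Tendsto (fun n : ℕ => p n d) atTop (nhds (q d)) ∧
      Tendsto (fun n : ℕ => ∑ j ∈ Finset.range (d + 1), p n j) atTop
        (nhds (∑ j ∈ Finset.range (d + 1), q j)) := by
  have norm_le_one {r : ℕ → ℝ} (hr : ∀ d, 0 ≤ r d) (hsum : Summable r ∧ ∑' d, r d ≤ 1) (d : ℕ) :
      ‖r d‖ ≤ 1 := by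
    rw [Real.norm_of_nonneg (hr d)]
    exact (hsum.1.le_tsum d fun j _ => hr j).trans hsum.2
  obtain ⟨a, ha, hacc⟩ := hacc
  have hlim : Tendsto p atTop (𝓝 q) :=
    tendsto_of_tendsto_pgf (fun n => norm_le_one (hp n) (hpsum n)) (norm_le_one hq hqsum)
      hΩ ha hacc hconv
  intro d
  exact ⟨tendsto_pi_nhds.1 hlim d, tendsto_finsetSum _ fun j _ => tendsto_pi_nhds.1 hlim j⟩
end

section
/- The generating function of r-canonical RNA secondary structures (minimum stack length r, no 1-arcs) is S_r(z) = (z^{2r} − (z−1)(z^{2r} − z^2 + 1) − √(p_r(z)))/(2 z^{2r}), where p_r(z) = (z^{2r} − (z−1)(z^{2r} − z^2 + 1))^2 − 4 z^{2r}(z^{2r} − z^2 + 1). -/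
open Finset Filter Topology Asymptotics

/-- An `r`-canonical secondary structure: every maximal stack of parallel arcs has
length at least `r`; equivalently every arc lies in a run of at least `r` parallel arcs. -/
def IsCanon (r n : ℕ) (A : Finset (ℕ × ℕ)) : Prop :=
  IsSecStr n A ∧ ∀ p ∈ A, ∃ s t : ℕ, r ≤ s + t + 1 ∧
    (∀ j ≤ s, (p.1 - j, p.2 + j) ∈ A) ∧ (∀ j ≤ t, (p.1 + j, p.2 - j) ∈ A)

/-- The polynomial `p_r(z)`. -/
noncomputable def prPoly (r : ℕ) (z : ℝ) : ℝ :=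
  (z ^ (2 * r) - (z - 1) * (z ^ (2 * r) - z ^ 2 + 1)) ^ 2 -
    4 * z ^ (2 * r) * (z ^ (2 * r) - z ^ 2 + 1)

/-- The generating function of `r`-canonical secondary structures, in closed form. -/
noncomputable def SrFun (r : ℕ) (z : ℝ) : ℝ :=
  (z ^ (2 * r) - (z - 1) * (z ^ (2 * r) - z ^ 2 + 1) - Real.sqrt (prPoly r z)) /
    (2 * z ^ (2 * r))

/-- `s_r(n)`: the number of `r`-canonical secondary structures of length `n`. -/
noncomputable def srCount (r n : ℕ) : ℕ :=
  Nat.card {A : Finset (ℕ × ℕ) // IsCanon r n A}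

/-!
Let `s`, `c`, `d` count the `r`-canonical structures of length `n`: all of them, the closed ones
(containing the arc `(1, n)`), and the others with `n ≥ 1`. Cutting at the partner of the first
vertex gives `s (n + 1) = s n + ∑ c j * s (n + 1 - j)`; peeling off the maximal stack of
`k ≥ r` outer arcs of a closed structure gives `c n = ∑ d (n - 2k)`; and `s = c + d + [n = 0]`.
For the generating functions `F`, `C`, `D` this reads `F = 1 + zF + CF`,
`C = z^{2r} / (1 - z²) · D`, `D = F - C - 1`, so `F` is a root of the quadratic behind `SrFun`.
The first recurrence, truncated, bounds the partial sums of `F` by `2` for `0 ≤ z ≤ 1/9`; this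
gives convergence and shows that `F` is the root with the minus sign.
-/

namespace RNA

/-- `IsCanon r n` relativised to arcs on the positions `a, …, b`, so that the pieces of a
decomposition can be described in place. -/
structure IsCanonOn (r a b : ℕ) (A : Finset (ℕ × ℕ)) : Prop where
  bounds : ∀ p ∈ A, a ≤ p.1 ∧ p.1 + 2 ≤ p.2 ∧ p.2 ≤ b
  disjoint : ∀ p ∈ A, ∀ q ∈ A, p ≠ q → p.1 ≠ q.1 ∧ p.1 ≠ q.2 ∧ p.2 ≠ q.1 ∧ p.2 ≠ q.2
  noncrossing : ∀ p ∈ A, ∀ q ∈ A, ¬ (p.1 < q.1 ∧ q.1 < p.2 ∧ p.2 < q.2)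
  stacked : ∀ p ∈ A, ∃ s t : ℕ, r ≤ s + t + 1 ∧
    (∀ j ≤ s, (p.1 - j, p.2 + j) ∈ A) ∧ (∀ j ≤ t, (p.1 + j, p.2 - j) ∈ A)

variable {r a b k : ℕ} {A B : Finset (ℕ × ℕ)}

theorem isCanon_iff_isCanonOn {n : ℕ} : IsCanon r n A ↔ IsCanonOn r 1 n A := by
  constructor
  · rintro ⟨⟨hb, hd, hc⟩, hs⟩
    exact ⟨fun p hp => by have := hb p hp; omega, hd, hc, hs⟩
  · rintro ⟨hb, hd, hc, hs⟩
    exact ⟨⟨fun p hp => by have := hb p hp; omega, hd, hc⟩, hs⟩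

def Compatible (p q : ℕ × ℕ) : Prop :=
  p.2 < q.1 ∨ q.2 < p.1 ∨ (p.1 < q.1 ∧ q.2 < p.2) ∨ (q.1 < p.1 ∧ p.2 < q.2)

namespace IsCanonOn

theorem of_bounds {a' b' : ℕ} (h : IsCanonOn r a b A)
    (h' : ∀ p ∈ A, a' ≤ p.1 ∧ p.2 ≤ b') : IsCanonOn r a' b' A :=
  ⟨fun p hp => by have := h.bounds p hp; have := h' p hp; omega,
    h.disjoint, h.noncrossing, h.stacked⟩

theorem filter (h : IsCanonOn r a b A) {P : ℕ × ℕ → Prop} [DecidablePred P]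
    (hout : ∀ p ∈ A, P p → ∀ s, (∀ j ≤ s, (p.1 - j, p.2 + j) ∈ A) → P (p.1 - s, p.2 + s))
    (hin : ∀ p ∈ A, P p → ∀ t, (∀ j ≤ t, (p.1 + j, p.2 - j) ∈ A) → P (p.1 + t, p.2 - t)) :
    IsCanonOn r a b (A.filter P) where
  bounds p hp := h.bounds p (mem_filter.1 hp).1
  disjoint p hp q hq := h.disjoint p (mem_filter.1 hp).1 q (mem_filter.1 hq).1
  noncrossing p hp q hq := h.noncrossing p (mem_filter.1 hp).1 q (mem_filter.1 hq).1
  stacked p hp := by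
    obtain ⟨hpA, hPp⟩ := mem_filter.1 hp
    obtain ⟨s, t, hst, hs, ht⟩ := h.stacked p hpA
    exact ⟨s, t, hst,
      fun j hj => mem_filter.2 ⟨hs j hj, hout p hpA hPp j fun i hi => hs i (hi.trans hj)⟩,
      fun j hj => mem_filter.2 ⟨ht j hj, hin p hpA hPp j fun i hi => ht i (hi.trans hj)⟩⟩

theorem union (hA : IsCanonOn r a b A) (hB : IsCanonOn r a b B)
    (hAB : ∀ p ∈ A, ∀ q ∈ B, Compatible p q) : IsCanonOn r a b (A ∪ B) where
  bounds p hp := (mem_union.1 hp).elim (hA.bounds p) (hB.bounds p)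
  disjoint p hp q hq hpq := by
    rcases mem_union.1 hp with hp | hp <;> rcases mem_union.1 hq with hq | hq
    · exact hA.disjoint p hp q hq hpq
    · have := hA.bounds p hp; have := hB.bounds q hq; have := hAB p hp q hq
      unfold Compatible at this; omega
    · have := hB.bounds p hp; have := hA.bounds q hq; have := hAB q hq p hp
      unfold Compatible at this; omega
    · exact hB.disjoint p hp q hq hpq
  noncrossing p hp q hq := by
    rcases mem_union.1 hp with hp | hp <;> rcases mem_union.1 hq with hq | hq
    · exact hA.noncrossing p hp q hq
    · have := hA.bounds p hp; have := hB.bounds q hq; have := hAB p hp q hq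
      unfold Compatible at this; omega
    · have := hB.bounds p hp; have := hA.bounds q hq; have := hAB q hq p hp
      unfold Compatible at this; omega
    · exact hB.noncrossing p hp q hq
  stacked p hp := by
    rcases mem_union.1 hp with hp | hp
    · obtain ⟨s, t, hst, hs, ht⟩ := hA.stacked p hp
      exact ⟨s, t, hst, fun j hj => mem_union_left _ (hs j hj),
        fun j hj => mem_union_left _ (ht j hj)⟩
    · obtain ⟨s, t, hst, hs, ht⟩ := hB.stacked p hp
      exact ⟨s, t, hst, fun j hj => mem_union_right _ (hs j hj),
        fun j hj => mem_union_right _ (ht j hj)⟩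

end IsCanonOn

def arcStack (a b k : ℕ) : Finset (ℕ × ℕ) := (range k).image fun i => (a + i, b - i)

theorem mem_arcStack {p : ℕ × ℕ} : p ∈ arcStack a b k ↔ ∃ i < k, (a + i, b - i) = p := by
  simp [arcStack]

theorem isCanonOn_arcStack (hrk : r ≤ k) (hk : a + 2 * k ≤ b) :
    IsCanonOn r a b (arcStack a b k) where
  bounds p hp := by
    obtain ⟨i, hi, rfl⟩ := mem_arcStack.1 hp
    dsimp only; omega
  disjoint p hp q hq hpq := by
    obtain ⟨i, hi, rfl⟩ := mem_arcStack.1 hp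
    obtain ⟨i', hi', rfl⟩ := mem_arcStack.1 hq
    have : i ≠ i' := by rintro rfl; exact hpq rfl
    dsimp only; omega
  noncrossing p hp q hq := by
    obtain ⟨i, hi, rfl⟩ := mem_arcStack.1 hp
    obtain ⟨i', hi', rfl⟩ := mem_arcStack.1 hq
    dsimp only; omega
  stacked p hp := by
    obtain ⟨i, hi, rfl⟩ := mem_arcStack.1 hp
    refine ⟨i, k - 1 - i, by omega, fun j hj => ?_, fun j hj => ?_⟩ <;> rw [mem_arcStack]
    · exact ⟨i - j, by omega, Prod.ext (by omega) (by omega)⟩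
    · exact ⟨i + j, by omega, Prod.ext (by omega) (by omega)⟩

theorem IsCanonOn.mem_arcStack_or (h : IsCanonOn r a b A) (hs : arcStack a b k ⊆ A)
    {p : ℕ × ℕ} (hp : p ∈ A) : p ∈ arcStack a b k ∨ (a + k ≤ p.1 ∧ p.2 ≤ b - k) := by
  obtain ⟨x, y⟩ := p
  have hpb := h.bounds _ hp
  dsimp only at hpb ⊢
  by_cases h1 : x < a + k
  · have hq : (x, b - (x - a)) ∈ arcStack a b k :=
      mem_arcStack.2 ⟨x - a, by omega, Prod.ext (by omega) (by omega)⟩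
    by_cases hxy : (x, y) = (x, b - (x - a))
    · exact .inl (hxy ▸ hq)
    · have := h.disjoint _ hp _ (hs hq) hxy; simp at this
  by_cases h2 : b - k < y
  · have hq : (a + (b - y), y) ∈ arcStack a b k :=
      mem_arcStack.2 ⟨b - y, by omega, Prod.ext (by omega) (by omega)⟩
    have hxy : (x, y) ≠ (a + (b - y), y) := by simp only [ne_eq, Prod.mk.injEq]; omega
    have := h.disjoint _ hp _ (hs hq) hxy; simp at this
  exact .inr ⟨by omega, by omega⟩

def shiftArc (k : ℕ) (p : ℕ × ℕ) : ℕ × ℕ := (p.1 + k, p.2 + k)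

theorem shiftArc_injective (k : ℕ) : Function.Injective (shiftArc k) := by
  intro p q h
  simp only [shiftArc, Prod.mk.injEq, Nat.add_right_cancel_iff] at h
  exact Prod.ext h.1 h.2

theorem mem_image_shiftArc {p : ℕ × ℕ} :
    p ∈ A.image (shiftArc k) ↔ k ≤ p.1 ∧ k ≤ p.2 ∧ (p.1 - k, p.2 - k) ∈ A := by
  constructor
  · rintro h
    obtain ⟨q, hq, rfl⟩ := mem_image.1 h
    simpa [shiftArc] using hq
  · rintro ⟨h1, h2, h⟩
    exact mem_image.2
      ⟨_, h, Prod.ext (by simp only [shiftArc]; omega) (by simp only [shiftArc]; omega)⟩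

theorem shiftArc_sub_add {p : ℕ × ℕ} {j : ℕ} (hj : j ≤ p.1) :
    ((shiftArc k p).1 - j, (shiftArc k p).2 + j) = shiftArc k (p.1 - j, p.2 + j) :=
  Prod.ext (by simp only [shiftArc]; omega) (by simp only [shiftArc]; omega)

theorem shiftArc_add_sub {p : ℕ × ℕ} {j : ℕ} (hj : j ≤ p.2) :
    ((shiftArc k p).1 + j, (shiftArc k p).2 - j) = shiftArc k (p.1 + j, p.2 - j) :=
  Prod.ext (by simp only [shiftArc]; omega) (by simp only [shiftArc]; omega)

theorem IsCanonOn.image_shiftArc (ha : 1 ≤ a) (h : IsCanonOn r a b A) :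
    IsCanonOn r (a + k) (b + k) (A.image (shiftArc k)) := by
  refine ⟨?_, ?_, ?_, ?_⟩ <;> simp only [forall_mem_image]
  · intro p hp
    have := h.bounds p hp
    simp only [shiftArc]
    omega
  · intro p hp q hq hpq
    have := h.disjoint p hp q hq fun he => hpq (he ▸ rfl)
    simp only [shiftArc]
    omega
  · intro p hp q hq
    have := h.noncrossing p hp q hq
    simp only [shiftArc]
    omega
  · intro p hp
    obtain ⟨s, t, hst, hs, ht⟩ := h.stacked p hp
    refine ⟨s, t, hst, fun j hj => ?_, fun j hj => ?_⟩
    · have := h.bounds _ (hs j hj)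
      rw [shiftArc_sub_add (by omega), (shiftArc_injective k).mem_finset_image]
      exact hs j hj
    · have := h.bounds _ (ht j hj)
      rw [shiftArc_add_sub (by omega), (shiftArc_injective k).mem_finset_image]
      exact ht j hj

theorem IsCanonOn.of_image_shiftArc (ha : 1 ≤ a)
    (h : IsCanonOn r (a + k) (b + k) (A.image (shiftArc k))) : IsCanonOn r a b A := by
  have hmem {p : ℕ × ℕ} : p ∈ A → shiftArc k p ∈ A.image (shiftArc k) := mem_image_of_mem _
  refine ⟨fun p hp => ?_, fun p hp q hq hpq => ?_, fun p hp q hq => ?_, fun p hp => ?_⟩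
  · have := h.bounds _ (hmem hp)
    simp only [shiftArc] at this
    omega
  · simpa [shiftArc] using h.disjoint _ (hmem hp) _ (hmem hq) ((shiftArc_injective k).ne hpq)
  · simpa [shiftArc] using h.noncrossing _ (hmem hp) _ (hmem hq)
  · obtain ⟨s, t, hst, hs, ht⟩ := h.stacked _ (hmem hp)
    refine ⟨s, t, hst, fun j hj => ?_, fun j hj => ?_⟩
    · have hj' := hs j hj
      have := h.bounds _ hj'
      simp only [shiftArc] at this
      rwa [shiftArc_sub_add (by omega), (shiftArc_injective k).mem_finset_image] at hj'
    · have hj' := ht j hj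
      have := h.bounds _ hj'
      simp only [shiftArc] at this
      rwa [shiftArc_add_sub (by omega), (shiftArc_injective k).mem_finset_image] at hj'

open Classical in
noncomputable def canonOn (r a b : ℕ) : Finset (Finset (ℕ × ℕ)) :=
  (Icc a b ×ˢ Icc a b).powerset.filter (IsCanonOn r a b)

theorem mem_canonOn : A ∈ canonOn r a b ↔ IsCanonOn r a b A := by
  classical
  refine mem_filter.trans ⟨And.right, fun h => ⟨mem_powerset.2 fun p hp => ?_, h⟩⟩
  have := h.bounds p hp
  simp only [mem_product, mem_Icc]
  omega

open Classical in
noncomputable def closedOn (r a b : ℕ) : Finset (Finset (ℕ × ℕ)) :=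
  (canonOn r a b).filter fun A => (a, b) ∈ A

open Classical in
/-- The condition `a ≤ b` excludes the empty window, so that `openCount r 0 = 0`. -/
noncomputable def openOn (r a b : ℕ) : Finset (Finset (ℕ × ℕ)) :=
  (canonOn r a b).filter fun A => a ≤ b ∧ (a, b) ∉ A

theorem canonOn_add (ha : 1 ≤ a) (k : ℕ) :
    canonOn r (a + k) (b + k) = (canonOn r a b).image (Finset.image (shiftArc k)) := by
  ext B
  simp only [mem_image, mem_canonOn]
  constructor
  · intro hB
    have hBk : B = (B.image fun p => (p.1 - k, p.2 - k)).image (shiftArc k) := by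
      ext p
      rw [mem_image_shiftArc, mem_image]
      constructor
      · intro hp
        have := hB.bounds p hp
        exact ⟨by omega, by omega, p, hp, rfl⟩
      · rintro ⟨h1, h2, q, hq, hqp⟩
        have := hB.bounds q hq
        simp only [Prod.mk.injEq] at hqp
        rwa [show p = q from Prod.ext (by omega) (by omega)]
    rw [hBk] at hB
    exact ⟨_, hB.of_image_shiftArc ha, hBk.symm⟩
  · rintro ⟨A, hA, rfl⟩
    exact hA.image_shiftArc ha

theorem card_canonOn_add (ha : 1 ≤ a) (k : ℕ) :
    #(canonOn r (a + k) (b + k)) = #(canonOn r a b) := by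
  rw [canonOn_add ha, card_image_of_injective _ (image_injective (shiftArc_injective k))]

theorem card_openOn_add (ha : 1 ≤ a) (k : ℕ) :
    #(openOn r (a + k) (b + k)) = #(openOn r a b) := by
  classical
  rw [openOn, openOn, canonOn_add ha, filter_image,
    card_image_of_injective _ (image_injective (shiftArc_injective k))]
  congr 2
  ext A
  exact and_congr Nat.add_le_add_iff_right
    (not_congr ((shiftArc_injective k).mem_finset_image (a := (a, b))))

theorem openOn_eq_empty (h : b < a) : openOn r a b = ∅ :=
  filter_eq_empty_iff.2 fun _ _ h' => absurd h'.1 (by omega)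

theorem filter_canonOn_forall_fst_ne :
    (canonOn r a b).filter (fun A => ∀ p ∈ A, p.1 ≠ a) = canonOn r (a + 1) b := by
  ext A
  simp only [mem_filter, mem_canonOn]
  constructor
  · rintro ⟨h, hA⟩
    exact h.of_bounds fun p hp => by have := h.bounds p hp; have := hA p hp; omega
  · intro h
    exact ⟨h.of_bounds fun p hp => by have := h.bounds p hp; omega,
      fun p hp => by have := h.bounds p hp; omega⟩

theorem IsCanonOn.snd_le_or_lt_fst (h : IsCanonOn r a b A) {j : ℕ} (hj : (a, j) ∈ A)
    {p : ℕ × ℕ} (hp : p ∈ A) : p.2 ≤ j ∨ j < p.1 := by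
  by_cases hpj : p = (a, j)
  · exact .inl (by rw [hpj])
  have := h.bounds p hp
  have := h.disjoint p hp _ hj hpj
  have := h.noncrossing _ hj p hp
  dsimp only at *
  omega

theorem IsCanonOn.filter_snd_le (h : IsCanonOn r a b A) {j : ℕ} (hj : (a, j) ∈ A) :
    IsCanonOn r a j (A.filter (·.2 ≤ j)) := by
  refine (h.filter (fun p hp hpj s hs => ?_) fun p _ hpj t _ => ?_).of_bounds fun p hp => ?_
  · have := h.snd_le_or_lt_fst hj (hs s le_rfl)
    have := h.bounds p hp
    dsimp only at *
    omega
  · dsimp only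
    omega
  · obtain ⟨hp, hpj⟩ := mem_filter.1 hp
    exact ⟨(h.bounds p hp).1, hpj⟩

theorem IsCanonOn.filter_not_snd_le (h : IsCanonOn r a b A) {j : ℕ} (hj : (a, j) ∈ A) :
    IsCanonOn r (j + 1) b (A.filter (¬ ·.2 ≤ j)) := by
  refine (h.filter (fun p _ hpj s _ => ?_) fun p hp hpj t ht => ?_).of_bounds fun p hp => ?_
  · dsimp only at *
    omega
  · have := h.snd_le_or_lt_fst hj hp
    have := h.bounds _ (ht t le_rfl)
    dsimp only at *
    omega
  · obtain ⟨hp, hpj⟩ := mem_filter.1 hp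
    have := h.snd_le_or_lt_fst hj hp
    have := h.bounds p hp
    omega

theorem card_filter_mem_canonOn {j : ℕ} (hj : j ≤ b) :
    #((canonOn r a b).filter fun A => (a, j) ∈ A) =
      #(closedOn r a j) * #(canonOn r (j + 1) b) := by
  classical
  rw [← card_product]
  refine card_nbij' (fun A => (A.filter (·.2 ≤ j), A.filter (¬ ·.2 ≤ j))) (fun P => P.1 ∪ P.2)
    (fun A hA => ?_) (fun P hP => ?_) (fun A _ => filter_union_filter_not_eq _ A) (fun P hP => ?_)
  · obtain ⟨h, hjA⟩ := mem_filter.1 hA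
    rw [mem_canonOn] at h
    simp only [coe_product, Set.mem_prod, mem_coe, closedOn, mem_filter, mem_canonOn]
    exact ⟨⟨h.filter_snd_le hjA, hjA, le_rfl⟩, h.filter_not_snd_le hjA⟩
  · simp only [coe_product, Set.mem_prod, mem_coe, closedOn, mem_filter, mem_canonOn] at hP
    obtain ⟨⟨hL, hjL⟩, hR⟩ := hP
    have := hL.bounds _ hjL
    refine mem_filter.2 ⟨mem_canonOn.2 <| (hL.of_bounds fun p hp => ?_).union
      (hR.of_bounds fun p hp => ?_) fun p hp q hq => ?_, mem_union_left _ hjL⟩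
    · have := hL.bounds p hp
      omega
    · have := hR.bounds p hp
      dsimp only at *
      omega
    · have := hL.bounds p hp
      have := hR.bounds q hq
      exact .inl (by omega)
  · simp only [coe_product, Set.mem_prod, mem_coe, closedOn, mem_filter, mem_canonOn] at hP
    obtain ⟨⟨hL, -⟩, hR⟩ := hP
    have hL' : ∀ p ∈ P.1, p.2 ≤ j := fun p hp => (hL.bounds p hp).2.2
    have hR' : ∀ p ∈ P.2, ¬ p.2 ≤ j := fun p hp => by have := hR.bounds p hp; omega
    simp only [filter_union, filter_true_of_mem hL', filter_false_of_mem hR',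
      filter_false_of_mem fun p hp => not_not.2 (hL' p hp), filter_true_of_mem hR',
      union_empty, empty_union]

theorem card_canonOn : #(canonOn r a b) = #(canonOn r (a + 1) b) +
    ∑ j ∈ Icc (a + 2) b, #(closedOn r a j) * #(canonOn r (j + 1) b) := by
  classical
  rw [← card_filter_add_card_filter_not (fun A => ∀ p ∈ A, p.1 ≠ a),
    filter_canonOn_forall_fst_ne,
    ← sum_congr rfl fun j hj => card_filter_mem_canonOn (r := r) (mem_Icc.1 hj).2]
  congr 1
  have hcover : (canonOn r a b).filter (fun A => ¬ ∀ p ∈ A, p.1 ≠ a) =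
      (Icc (a + 2) b).biUnion fun j => (canonOn r a b).filter fun A => (a, j) ∈ A := by
    ext A
    simp only [mem_filter, mem_biUnion, mem_Icc, mem_canonOn, not_forall, not_not]
    constructor
    · rintro ⟨h, p, hp, rfl⟩
      have := h.bounds p hp
      exact ⟨p.2, ⟨by omega, by omega⟩, h, hp⟩
    · rintro ⟨j, -, h, hj⟩
      exact ⟨h, _, hj, rfl⟩
  rw [hcover, card_biUnion]
  intro j _ j' _ hjj'
  simp only [Function.onFun]
  rw [disjoint_filter]
  intro A hA hj hj'
  have := (mem_canonOn.1 hA).disjoint _ hj _ hj' (by simpa using hjj')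
  simp at this

def HasOuterStack (a b k : ℕ) (A : Finset (ℕ × ℕ)) : Prop :=
  arcStack a b k ⊆ A ∧ (a + k, b - k) ∉ A

theorem HasOuterStack.eq {l : ℕ} (hk : HasOuterStack a b k A) (hl : HasOuterStack a b l A) :
    k = l := by
  by_contra hkl
  rcases Nat.lt_or_gt_of_ne hkl with h | h
  · exact hk.2 (hl.1 (mem_arcStack.2 ⟨k, h, rfl⟩))
  · exact hl.2 (hk.1 (mem_arcStack.2 ⟨l, h, rfl⟩))

theorem IsCanonOn.exists_hasOuterStack (h : IsCanonOn r a b A) (hab : (a, b) ∈ A) :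
    ∃ k ∈ Icc r b, HasOuterStack a b k A := by
  classical
  have hb : (a + b, b - b) ∉ A := fun hm => by have := h.bounds _ hm; dsimp only at this; omega
  have hex : ∃ k, (a + k, b - k) ∉ A := ⟨b, hb⟩
  obtain ⟨s, t, hst, hs, ht⟩ := h.stacked _ hab
  have hs0 : s = 0 := by
    by_contra hs0
    have := h.bounds _ (hs 1 (by omega))
    dsimp only at this
    omega
  have htk : t < Nat.find hex := (Nat.lt_find_iff hex t).2 fun i hi => not_not.2 (ht i hi)
  refine ⟨Nat.find hex, mem_Icc.2 ⟨by omega, Nat.find_min' hex hb⟩, fun p hp => ?_,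
    Nat.find_spec hex⟩
  obtain ⟨i, hi, rfl⟩ := mem_arcStack.1 hp
  exact not_not.1 (Nat.find_min hex hi)

theorem IsCanonOn.filter_inside (h : IsCanonOn r a b A) (hs : HasOuterStack a b k A)
    (hk : 1 ≤ k) : IsCanonOn r (a + k) (b - k) (A.filter (a + k ≤ ·.1)) := by
  refine (h.filter (fun p hp hpk s hrun => ?_) fun p _ hpk t _ => ?_).of_bounds fun p hp => ?_
  · -- A run outwards from `p` that left `[a + k, b - k]` would meet the innermost arc
    -- `(a + k - 1, b - k + 1)` of the stack, one step after passing through `(a + k, b - k)`.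
    by_contra hlt
    set i := p.1 + 1 - (a + k)
    have hq := h.mem_arcStack_or hs.1 (hrun i (by omega))
    simp only [mem_arcStack, Prod.mk.injEq] at hq
    obtain ⟨i', -, hi'1, hi'2⟩ | hq := hq
    · exact hs.2 (by convert hrun (i - 1) (by omega) using 2 <;> omega)
    · omega
  · dsimp only
    omega
  · obtain ⟨hp, hpk⟩ := mem_filter.1 hp
    rcases h.mem_arcStack_or hs.1 hp with hp' | hp'
    · obtain ⟨i, hi, rfl⟩ := mem_arcStack.1 hp'
      dsimp only at hpk
      omega
    · exact ⟨hpk, hp'.2⟩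

theorem IsCanonOn.arcStack_union (hB : IsCanonOn r (a + k) (b - k) B) (hrk : r ≤ k)
    (hab : a + 2 * k ≤ b) : IsCanonOn r a b (arcStack a b k ∪ B) := by
  refine (isCanonOn_arcStack hrk hab).union (hB.of_bounds fun p hp => ?_) fun p hp q hq => ?_
  · have := hB.bounds p hp
    omega
  · obtain ⟨i, hi, rfl⟩ := mem_arcStack.1 hp
    have := hB.bounds q hq
    exact .inr (.inr (.inl ⟨by dsimp only; omega, by dsimp only; omega⟩))

open Classical in
theorem card_filter_closedOn_hasOuterStack (hrk : r ≤ k) (hk : 1 ≤ k) :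
    #((closedOn r a b).filter (HasOuterStack a b k)) = #(openOn r (a + k) (b - k)) := by
  refine card_nbij' (fun A => A.filter (a + k ≤ ·.1)) (arcStack a b k ∪ ·)
    (fun A hA => ?_) (fun B hB => ?_) (fun A hA => ?_) (fun B hB => ?_)
  · simp only [mem_coe, mem_filter, closedOn, mem_canonOn] at hA
    obtain ⟨⟨h, -⟩, hs⟩ := hA
    have hin := h.bounds _ (hs.1 (mem_arcStack.2 ⟨k - 1, by omega, rfl⟩))
    dsimp only at hin
    simp only [mem_coe, openOn, mem_filter, mem_canonOn, not_and]
    exact ⟨h.filter_inside hs hk, by omega, fun h' => (hs.2 h').elim⟩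
  · simp only [mem_coe, openOn, mem_filter, mem_canonOn] at hB
    obtain ⟨hB, hle, hns⟩ := hB
    simp only [mem_coe, closedOn, mem_filter, mem_canonOn, HasOuterStack,
      mem_union, mem_arcStack, not_or, not_exists, not_and]
    refine ⟨⟨hB.arcStack_union hrk (by omega), .inl ⟨0, hk, by simp⟩⟩, subset_union_left,
      fun i hi he => ?_, hns⟩
    simp only [Prod.mk.injEq] at he
    omega
  · simp only [mem_coe, mem_filter, closedOn, mem_canonOn] at hA
    obtain ⟨⟨h, -⟩, hs, -⟩ := hA
    ext p
    simp only [mem_union, mem_filter]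
    refine ⟨fun hp => hp.elim (fun hp => hs hp) And.left, fun hp => ?_⟩
    exact (h.mem_arcStack_or hs hp).imp_right fun h' => ⟨hp, h'.1⟩
  · simp only [mem_coe, openOn, mem_filter, mem_canonOn] at hB
    dsimp only
    rw [filter_union, filter_true_of_mem fun p hp => (hB.1.bounds p hp).1,
      filter_false_of_mem fun p hp => ?_, empty_union]
    obtain ⟨i, hi, rfl⟩ := mem_arcStack.1 hp
    dsimp only
    omega

theorem card_closedOn (hr : 1 ≤ r) :
    #(closedOn r a b) = ∑ k ∈ Icc r b, #(openOn r (a + k) (b - k)) := by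
  classical
  have hcover : closedOn r a b =
      (Icc r b).biUnion fun k => (closedOn r a b).filter (HasOuterStack a b k) := by
    ext A
    simp only [mem_biUnion, mem_filter]
    refine ⟨fun hA => ?_, fun ⟨_, _, hA, _⟩ => hA⟩
    obtain ⟨h, hab⟩ := mem_filter.1 hA
    obtain ⟨k, hk, hks⟩ := (mem_canonOn.1 h).exists_hasOuterStack hab
    exact ⟨k, hk, hA, hks⟩
  rw [hcover, card_biUnion]
  · exact sum_congr rfl fun k hk =>
      card_filter_closedOn_hasOuterStack (mem_Icc.1 hk).1 (hr.trans (mem_Icc.1 hk).1)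
  · intro k _ l _ hkl
    simp only [Function.onFun]
    rw [disjoint_filter]
    exact fun A _ hk hl => hkl (hk.eq hl)

noncomputable def canonCount (r n : ℕ) : ℕ := #(canonOn r 1 n)

noncomputable def closedCount (r n : ℕ) : ℕ := #(closedOn r 1 n)

noncomputable def openCount (r n : ℕ) : ℕ := #(openOn r 1 n)

/-- Coefficients of `z ^ (2 * r) / (1 - z ^ 2)`: the two ends of a stack of `k ≥ r` arcs. -/
def stackWeight (r n : ℕ) : ℕ := if 2 * r ≤ n ∧ Even n then 1 else 0

theorem srCount_eq_canonCount (r n : ℕ) : srCount r n = canonCount r n := by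
  rw [srCount, canonCount, ← Nat.card_eq_finsetCard]
  exact Nat.card_congr <| Equiv.subtypeEquivRight fun A => by
    rw [mem_canonOn, isCanon_iff_isCanonOn]

theorem canonCount_zero (r : ℕ) : canonCount r 0 = 1 := by
  refine card_eq_one.2 ⟨∅, ext fun A => ?_⟩
  rw [mem_canonOn, mem_singleton]
  refine ⟨fun h => eq_empty_of_forall_notMem fun p hp => ?_, ?_⟩
  · have := h.bounds p hp
    omega
  · rintro rfl
    exact ⟨by simp, by simp, by simp, by simp⟩

theorem closedCount_eq_zero {n : ℕ} (hn : n ≤ 2) : closedCount r n = 0 :=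
  card_eq_zero.2 <| filter_eq_empty_iff.2 fun A hA h1n => by
    have := (mem_canonOn.1 hA).bounds _ h1n
    dsimp only at this
    omega

theorem openCount_zero (r : ℕ) : openCount r 0 = 0 := by
  rw [openCount, openOn_eq_empty zero_lt_one, card_empty]

theorem closedCount_add_openCount {n : ℕ} (hn : n ≠ 0) :
    closedCount r n + openCount r n = canonCount r n := by
  classical
  rw [closedCount, openCount, canonCount, closedOn, openOn,
    ← card_filter_add_card_filter_not (s := canonOn r 1 n) (fun A => (1, n) ∈ A)]
  congr 2
  exact filter_congr fun A _ => and_iff_right (by omega)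

theorem canonCount_succ (n : ℕ) : canonCount r (n + 1) =
    canonCount r n + ∑ j ∈ range (n + 2), closedCount r j * canonCount r (n + 1 - j) := by
  rw [canonCount, card_canonOn, card_canonOn_add le_rfl 1]
  congr 1
  refine (sum_congr rfl fun j hj => ?_).trans
    (sum_subset (fun j hj => mem_range.2 (by have := mem_Icc.1 hj; omega)) fun j hj' hj => ?_)
  · have := card_canonOn_add (r := r) (b := n + 1 - j) le_rfl j
    rw [add_comm 1 j, Nat.sub_add_cancel (mem_Icc.1 hj).2] at this
    rw [this, closedCount, canonCount]
  · simp only [mem_Icc, mem_range] at hj hj'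
    rw [closedCount_eq_zero (by omega), zero_mul]

theorem closedCount_eq_sum (hr : 1 ≤ r) (n : ℕ) :
    closedCount r n = ∑ j ∈ range (n + 1), stackWeight r j * openCount r (n - j) := by
  have hterm (k : ℕ) : #(openOn r (1 + k) (n - k)) = openCount r (n - 2 * k) := by
    rcases le_or_gt (2 * k) n with h | h
    · have := card_openOn_add (r := r) (b := n - 2 * k) le_rfl k
      rw [show n - 2 * k + k = n - k by omega] at this
      rw [this, openCount]
    · rw [openOn_eq_empty (by omega), show n - 2 * k = 0 by omega, openCount_zero, card_empty]
  have hevens : (range (n + 1)).filter (fun j => 2 * r ≤ j ∧ Even j) =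
      (Icc r (n / 2)).image (2 * ·) := by
    ext j
    simp only [mem_filter, mem_range, mem_image, mem_Icc, Nat.even_iff]
    refine ⟨fun h => ⟨j / 2, by omega, by omega⟩, ?_⟩
    rintro ⟨k, hk, rfl⟩
    omega
  rw [closedCount, card_closedOn hr, sum_congr rfl fun k _ => hterm k]
  simp only [stackWeight, ite_mul, one_mul, zero_mul]
  rw [← sum_filter, hevens, sum_image fun x _ y _ h => by simpa using h]
  refine (sum_subset (Icc_subset_Icc_right (Nat.div_le_self n 2)) fun k hk hk' => ?_).symm
  simp only [mem_Icc] at hk hk'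
  rw [show n - 2 * k = 0 by omega, openCount_zero]

theorem openCount_le_canonCount (n : ℕ) : openCount r n ≤ canonCount r n :=
  card_le_card (filter_subset _ _)

theorem closedCount_le_canonCount (n : ℕ) : closedCount r n ≤ canonCount r n :=
  card_le_card (filter_subset _ _)

theorem sum_range_convolution (u v : ℕ → ℝ) (x : ℝ) (N : ℕ) :
    ∑ n ∈ range N, (∑ j ∈ range (n + 1), u j * v (n - j)) * x ^ n =
      ∑ j ∈ range N, u j * x ^ j * ∑ b ∈ range (N - j), v b * x ^ b := by
  have hcomm := sum_Ico_Ico_comm 0 N fun j n => u j * v (n - j) * x ^ n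
  simp only [← range_eq_Ico] at hcomm
  simp only [sum_mul, ← hcomm, mul_sum]
  refine sum_congr rfl fun j _ => ?_
  rw [sum_Ico_eq_sum_range]
  refine sum_congr rfl fun b _ => ?_
  rw [Nat.add_sub_cancel_left, pow_add]
  ring

theorem sum_range_convolution_le {u v : ℕ → ℝ} {x : ℝ} {K : ℕ} (hu : ∀ n, 0 ≤ u n)
    (hv : ∀ n, 0 ≤ v n) (hx : 0 ≤ x) (hK : ∀ j < K, u j = 0) (N : ℕ) :
    ∑ n ∈ range N, (∑ j ∈ range (n + 1), u j * v (n - j)) * x ^ n ≤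
      (∑ j ∈ range N, u j * x ^ j) * ∑ b ∈ range (N - K), v b * x ^ b := by
  rw [sum_range_convolution, sum_mul]
  refine sum_le_sum fun j _ => ?_
  rcases lt_or_ge j K with h | h
  · simp [hK j h]
  · exact mul_le_mul_of_nonneg_left
      (sum_le_sum_of_subset_of_nonneg (range_subset_range.2 (by omega))
        fun b _ _ => mul_nonneg (hv b) (pow_nonneg hx b))
      (mul_nonneg (hu j) (pow_nonneg hx j))

theorem hasSum_convolution {u v : ℕ → ℝ} {z : ℝ} (hu : Summable fun n => u n * z ^ n)
    (hv : Summable fun n => v n * z ^ n) :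
    HasSum (fun n => (∑ j ∈ range (n + 1), u j * v (n - j)) * z ^ n)
      ((∑' n, u n * z ^ n) * ∑' n, v n * z ^ n) := by
  refine (hasSum_sum_range_mul_of_summable_norm (f := fun n => u n * z ^ n)
    (g := fun n => v n * z ^ n) (by simpa only [Real.norm_eq_abs] using hu.abs)
    (by simpa only [Real.norm_eq_abs] using hv.abs)).congr_fun fun n => ?_
  rw [sum_mul]
  refine sum_congr rfl fun j hj => ?_
  rw [← Nat.add_sub_cancel' (mem_range_succ_iff.1 hj), pow_add, Nat.add_sub_cancel_left]
  ring

theorem eq_sub_sqrt_div_of_quadratic {a b c x : ℝ} (ha : 0 < a) (hx : 2 * a * x ≤ b)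
    (h : a * x ^ 2 - b * x + c = 0) : x = (b - √(b ^ 2 - 4 * a * c)) / (2 * a) := by
  have hdisc : b ^ 2 - 4 * a * c = (b - 2 * a * x) ^ 2 := by linear_combination (-4 * a) * h
  rw [hdisc, Real.sqrt_sq (by linarith)]
  field_simp
  ring

variable {x z : ℝ}

theorem sum_range_stackWeight_le (hr : 1 ≤ r) (hx0 : 0 ≤ x) (hx1 : x < 1) (M : ℕ) :
    ∑ l ∈ range M, (stackWeight r l : ℝ) * x ^ l ≤ x ^ 2 / (1 - x) := by
  calc ∑ l ∈ range M, (stackWeight r l : ℝ) * x ^ l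
      ≤ ∑ l ∈ range M, if 2 ≤ l then x ^ l else 0 := by
        refine sum_le_sum fun l _ => ?_
        unfold stackWeight
        split_ifs <;> first | omega | simp [pow_nonneg hx0]
    _ = ∑ l ∈ Ico 2 M, x ^ l := by
        rw [← sum_filter]
        congr 1
        ext l
        simp only [mem_filter, mem_range, mem_Ico]
        omega
    _ ≤ x ^ 2 / (1 - x) := geom_sum_Ico_le_of_lt_one hx0 hx1

theorem hasSum_stackWeight (r : ℕ) (hz0 : 0 ≤ z) (hz1 : z < 1) :
    HasSum (fun n => (stackWeight r n : ℝ) * z ^ n) (z ^ (2 * r) / (1 - z ^ 2)) := by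
  have hinj : Function.Injective fun k => 2 * r + 2 * k := fun k l h => by dsimp only at h; omega
  rw [← hinj.hasSum_iff fun n hn => ?_]
  · have hterm : ((fun n => (stackWeight r n : ℝ) * z ^ n) ∘ fun k => 2 * r + 2 * k) =
        fun k => z ^ (2 * r) * (z ^ 2) ^ k := by
      funext k
      rw [Function.comp_apply, stackWeight, if_pos ⟨by omega, r + k, by ring⟩, Nat.cast_one,
        one_mul, pow_add, pow_mul, pow_mul]
    rw [hterm, div_eq_mul_inv]
    exact (hasSum_geometric_of_lt_one (sq_nonneg z) (by nlinarith)).mul_left _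
  · simp only [Set.mem_range, not_exists] at hn
    simp only [stackWeight]
    split_ifs with h
    · obtain ⟨m, hm⟩ := h.2
      exact (hn (m - r) (by omega)).elim
    · simp

theorem sum_range_closedCount_le (hr : 1 ≤ r) (hx0 : 0 ≤ x) (hx1 : x < 1) (M : ℕ) :
    ∑ j ∈ range M, (closedCount r j : ℝ) * x ^ j ≤
      x ^ 2 / (1 - x) * ∑ n ∈ range (M - 2), (canonCount r n : ℝ) * x ^ n := by
  simp only [closedCount_eq_sum hr, Nat.cast_sum, Nat.cast_mul]
  refine (sum_range_convolution_le (u := fun j => (stackWeight r j : ℝ))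
    (v := fun b => (openCount r b : ℝ)) (K := 2) (fun _ => by positivity) (fun _ => by positivity)
    hx0 (fun j hj => ?_) _).trans (mul_le_mul (sum_range_stackWeight_le hr hx0 hx1 _)
      (sum_le_sum fun n _ => ?_) (sum_nonneg fun _ _ => by positivity) (by positivity))
  · rw [stackWeight, if_neg (by omega), Nat.cast_zero]
  · exact mul_le_mul_of_nonneg_right (by exact_mod_cast openCount_le_canonCount n)
      (pow_nonneg hx0 n)

theorem sum_range_canonCount_succ_le (hr : 1 ≤ r) (hx0 : 0 ≤ x) (hx1 : x < 1) (N : ℕ) :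
    ∑ n ∈ range (N + 1), (canonCount r n : ℝ) * x ^ n ≤
      1 + x * ∑ n ∈ range N, (canonCount r n : ℝ) * x ^ n +
        x ^ 2 / (1 - x) * (∑ n ∈ range (N - 1), (canonCount r n : ℝ) * x ^ n) *
          ∑ n ∈ range (N - 2), (canonCount r n : ℝ) * x ^ n := by
  have hsucc (n : ℕ) : (canonCount r (n + 1) : ℝ) * x ^ (n + 1) = x * (canonCount r n * x ^ n) +
      (∑ j ∈ range (n + 2), (closedCount r j : ℝ) * canonCount r (n + 1 - j)) * x ^ (n + 1) := by
    rw [canonCount_succ n]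
    push_cast
    ring
  have hconv : ∑ n ∈ range N,
      (∑ j ∈ range (n + 2), (closedCount r j : ℝ) * canonCount r (n + 1 - j)) * x ^ (n + 1) ≤
        x ^ 2 / (1 - x) * (∑ n ∈ range (N - 1), (canonCount r n : ℝ) * x ^ n) *
          ∑ n ∈ range (N - 2), (canonCount r n : ℝ) * x ^ n := by
    have h0 := sum_range_succ' (fun n => (∑ j ∈ range (n + 1),
      (closedCount r j : ℝ) * canonCount r (n - j)) * x ^ n) N
    simp only [zero_add, range_one, sum_singleton, closedCount_eq_zero (zero_le_two),
      Nat.cast_zero, zero_mul, add_zero] at h0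
    rw [← h0]
    refine (sum_range_convolution_le (u := fun j => (closedCount r j : ℝ))
      (v := fun b => (canonCount r b : ℝ)) (K := 3) (fun _ => by positivity)
      (fun _ => by positivity) hx0
      (fun j hj => by rw [closedCount_eq_zero (by omega), Nat.cast_zero]) _).trans ?_
    rw [show N + 1 - 3 = N - 2 by omega]
    exact mul_le_mul_of_nonneg_right (sum_range_closedCount_le hr hx0 hx1 _)
      (sum_nonneg fun _ _ => by positivity)
  rw [sum_range_succ', sum_congr rfl fun n _ => hsucc n, sum_add_distrib, ← mul_sum,
    canonCount_zero, Nat.cast_one, pow_zero, mul_one]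
  linarith

theorem sum_range_canonCount_le_two (hr : 1 ≤ r) (hx0 : 0 ≤ x) (hx : x ≤ 1 / 9) (N : ℕ) :
    ∑ n ∈ range N, (canonCount r n : ℝ) * x ^ n ≤ 2 := by
  induction N using Nat.strong_induction_on with
  | _ N ih =>
    rcases N with _ | N
    · simp
    have hP (M : ℕ) : 0 ≤ ∑ n ∈ range M, (canonCount r n : ℝ) * x ^ n :=
      sum_nonneg fun _ _ => by positivity
    have hq : x ^ 2 / (1 - x) ≤ 1 / 72 := by
      rw [div_le_iff₀ (by linarith)]
      nlinarith
    have h1 := ih N (by omega)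
    have h2 := mul_le_mul (ih (N - 1) (by omega)) (ih (N - 2) (by omega)) (hP _) (by norm_num)
    have h3 := mul_le_mul_of_nonneg_left h2 (div_nonneg (sq_nonneg x) (by linarith : 0 ≤ 1 - x))
    refine (sum_range_canonCount_succ_le hr hx0 (by linarith) N).trans ?_
    nlinarith [hP N, hP (N - 1)]

theorem summable_canonCount (hr : 1 ≤ r) (hz0 : 0 ≤ z) (hz : z ≤ 1 / 9) :
    Summable fun n => (canonCount r n : ℝ) * z ^ n :=
  summable_of_sum_range_le (fun _ => by positivity) (sum_range_canonCount_le_two hr hz0 hz)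

theorem summable_closedCount (hr : 1 ≤ r) (hz0 : 0 ≤ z) (hz : z ≤ 1 / 9) :
    Summable fun n => (closedCount r n : ℝ) * z ^ n :=
  (summable_canonCount hr hz0 hz).of_nonneg_of_le (fun _ => by positivity) fun n =>
    mul_le_mul_of_nonneg_right (by exact_mod_cast closedCount_le_canonCount n) (by positivity)

theorem summable_openCount (hr : 1 ≤ r) (hz0 : 0 ≤ z) (hz : z ≤ 1 / 9) :
    Summable fun n => (openCount r n : ℝ) * z ^ n :=
  (summable_canonCount hr hz0 hz).of_nonneg_of_le (fun _ => by positivity) fun n =>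
    mul_le_mul_of_nonneg_right (by exact_mod_cast openCount_le_canonCount n) (by positivity)

theorem tsum_canonCount_eq (hr : 1 ≤ r) (hz0 : 0 ≤ z) (hz : z ≤ 1 / 9) :
    ∑' n, (canonCount r n : ℝ) * z ^ n = 1 + z * ∑' n, (canonCount r n : ℝ) * z ^ n +
      (∑' n, (closedCount r n : ℝ) * z ^ n) * ∑' n, (canonCount r n : ℝ) * z ^ n := by
  have hF := (summable_canonCount hr hz0 hz).hasSum
  have hCF := hasSum_convolution (summable_closedCount hr hz0 hz) (summable_canonCount hr hz0 hz)
  have hshift := (hasSum_nat_add_iff' 1).2 hF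
  have hshift' := (hasSum_nat_add_iff' 1).2 hCF
  simp only [range_one, sum_singleton, canonCount_zero, closedCount_eq_zero zero_le_two,
    Nat.cast_zero, Nat.cast_one, zero_mul, zero_add, one_mul, sub_zero, pow_zero] at hshift hshift'
  have hrec : HasSum (fun n => (canonCount r (n + 1) : ℝ) * z ^ (n + 1))
      (z * ∑' n, (canonCount r n : ℝ) * z ^ n +
        (∑' n, (closedCount r n : ℝ) * z ^ n) * ∑' n, (canonCount r n : ℝ) * z ^ n) := by
    refine ((hF.mul_left z).add hshift').congr_fun fun n => ?_
    rw [canonCount_succ n]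
    push_cast
    ring
  linarith [hshift.unique hrec]

theorem tsum_closedCount_eq (hr : 1 ≤ r) (hz0 : 0 ≤ z) (hz : z ≤ 1 / 9) :
    ∑' n, (closedCount r n : ℝ) * z ^ n =
      z ^ (2 * r) / (1 - z ^ 2) * ∑' n, (openCount r n : ℝ) * z ^ n := by
  have hG := hasSum_stackWeight r hz0 (by linarith)
  rw [← hG.tsum_eq]
  refine HasSum.tsum_eq <|
    (hasSum_convolution hG.summable (summable_openCount hr hz0 hz)).congr_fun fun n => ?_
  rw [closedCount_eq_sum hr n]
  push_cast
  rfl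

theorem tsum_openCount_eq (hr : 1 ≤ r) (hz0 : 0 ≤ z) (hz : z ≤ 1 / 9) :
    ∑' n, (openCount r n : ℝ) * z ^ n =
      ∑' n, (canonCount r n : ℝ) * z ^ n - ∑' n, (closedCount r n : ℝ) * z ^ n - 1 := by
  refine HasSum.tsum_eq <| (((summable_canonCount hr hz0 hz).hasSum.sub
    (summable_closedCount hr hz0 hz).hasSum).sub (hasSum_ite_eq 0 (1 : ℝ))).congr_fun fun n => ?_
  rcases eq_or_ne n 0 with rfl | hn
  · simp [canonCount_zero, openCount_zero, closedCount_eq_zero]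
  · rw [if_neg hn, ← closedCount_add_openCount hn]
    push_cast
    ring

theorem tsum_canonCount_quadratic (hr : 1 ≤ r) (hz0 : 0 ≤ z) (hz : z ≤ 1 / 9) :
    z ^ (2 * r) * (∑' n, (canonCount r n : ℝ) * z ^ n) ^ 2 -
      (z ^ (2 * r) - (z - 1) * (z ^ (2 * r) - z ^ 2 + 1)) * ∑' n, (canonCount r n : ℝ) * z ^ n +
        (z ^ (2 * r) - z ^ 2 + 1) = 0 := by
  have hF := tsum_canonCount_eq hr hz0 hz
  have hC := tsum_closedCount_eq hr hz0 hz
  have hD := tsum_openCount_eq hr hz0 hz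
  set F := ∑' n, (canonCount r n : ℝ) * z ^ n
  set C := ∑' n, (closedCount r n : ℝ) * z ^ n
  set D := ∑' n, (openCount r n : ℝ) * z ^ n
  set G := z ^ (2 * r) / (1 - z ^ 2)
  have hG : G * (1 - z ^ 2) = z ^ (2 * r) := div_mul_cancel₀ _ (by nlinarith)
  linear_combination (-(1 - z ^ 2) * (G + 1)) * hF + (-(1 - z ^ 2) * F) * hC +
    (-(1 - z ^ 2) * F * G) * hD - (F * (F - 1) - (1 - z) * F + 1) * hG

end RNA

/-- The generating function of `r`-canonical secondary structures:
`S_r(z) = (z^{2r} − (z−1)(z^{2r}−z²+1) − √(p_r(z)))/(2z^{2r})`. -/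
theorem canonical_gf (r : ℕ) (hr : 1 ≤ r) :
    ∃ ε : ℝ, 0 < ε ∧ ∀ z : ℝ, 0 < z → z < ε →
      ∑' n : ℕ, (srCount r n : ℝ) * z ^ n = SrFun r z := by
  refine ⟨1 / 9, by norm_num, fun z hz0 hz => ?_⟩
  simp only [RNA.srCount_eq_canonCount]
  set F := ∑' n, (RNA.canonCount r n : ℝ) * z ^ n
  have hF : F ≤ 2 := Real.tsum_le_of_sum_range_le (fun _ => by positivity)
    (RNA.sum_range_canonCount_le_two hr hz0.le hz.le)
  have hw0 : 0 < z ^ (2 * r) := by positivity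
  have hw : z ^ (2 * r) ≤ z ^ 2 := pow_le_pow_of_le_one hz0.le (by linarith) (by omega)
  have hsign : 2 * z ^ (2 * r) * F ≤ z ^ (2 * r) - (z - 1) * (z ^ (2 * r) - z ^ 2 + 1) := by
    nlinarith [mul_le_mul_of_nonneg_left hF hw0.le]
  rw [SrFun, prPoly]
  exact RNA.eq_sub_sqrt_div_of_quadratic hw0 hsign (RNA.tsum_canonCount_quadratic hr hz0.le hz.le)
end
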